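/- arXiv:1401.4713 — 9 statements merged into one kernel-verified Lean document; each statement's English description precedes it below -/
import Mathlib

section
/- Let n ≥ 2 and m ≥ 1 be integers, and let z_0 ∈ ℂ be a periodic point of minimal period m of the map f_0(w) = w^n with z_0 ≠ 0. For a parameter vector a = (a_0,…,a_{n−2},a_{n+1},…,a_{2n−1}) ∈ ℂ^{2n−2} define the rational map f_a(z) = (z^n + a_{n−2}z^{n−2} + ⋯ + a_1 z + a_0)/(1 − a_{n+1}z − a_{n+2}z^2 − ⋯ − a_{2n−1}z^{n−1}). Suppose z(·) is a holomorphic function on a neighborhood of 0 in ℂ^{2n−2} such that z(0) = z_0 and f_a^{∘m}(z(a)) = z(a) for all a in that neighborhood, and let λ(a) denote the derivative of the m-th iterate f_a^{∘m} at the point z(a). Then for every index j with 0 ≤ j ≤ 2n−1, j ≠ n−1, j ≠ n, the partial derivative of λ at a = 0 with respect to a_j equals (j·n^{m−1} − n^m)·Σ_{i=0}^{m−1} z_0^{n^i(j−n)}, where the powers of the nonzero number z_0 are integer powers. -/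
/-!
Restrict to the complex line `t ↦ t • e_k`. Along it `f_t(w)` is `w^n + t w^j` or
`w^n / (1 - t w^(j-n))`, so `∂ₜ f_t(w) = w^j` at `t = 0`. Write `Z_l = z₀^(n^l)` for the orbit
of `f_0` and `δ_l` for the derivative at `t = 0` of the moving orbit point `f_t^l(z(t e_k))`.
The chain rule gives `δ_{l+1} = Z_l^j + n Z_l^(n-1) δ_l`, so `T_l = δ_l / Z_l` satisfies
`T_{l+1} - T_l = Z_l^(j-n) + (n-1) T_l`; periodicity `δ_m = δ_0` makes these differences sum to
zero over a period, whence `(n-1) ∑ T_l = -∑ Z_l^(j-n)`.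

The multiplier is `∏ f_t'(f_t^l(z))`, so its logarithmic derivative at `t = 0` is the sum over
the orbit of `(∂ₜ f_t' + f_0'' δ_l) / f_0'` at `Z_l`. Since the mixed partials of the holomorphic
map `(t, w) ↦ f_t(w)` commute, `∂ₜ f_t'(w) = (w^j)' = j w^(j-1)`, and each term equals
`(j/n) Z_l^(j-n) + (n-1) T_l`. Summing, and using that the multiplier at `t = 0` is `n^m`, gives
`(j n^(m-1) - n^m) ∑ Z_l^(j-n)`.
-/

/-- Extract the `i`-th coordinate of a parameter vector `a ∈ ℂ^{2n-2}` (junk value `0`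
outside the range). The parameter coordinate `k` corresponds to the coefficient `a_{σ(k)}`
of the rational map, where `σ(k) = k` for `0 ≤ k ≤ n-2` and `σ(k) = k+2` for
`n-1 ≤ k ≤ 2n-3` (so that `σ` enumerates `{0,…,n-2} ∪ {n+1,…,2n-1}`). -/
def coeffs (n : ℕ) (a : Fin (2 * n - 2) → ℂ) : ℕ → ℂ :=
  fun i => if h : i < 2 * n - 2 then a ⟨i, h⟩ else 0

/-- The coefficient index `σ(k) ∈ {0,…,n-2} ∪ {n+1,…,2n-1}` associated to the parameter
coordinate `k ∈ {0,…,2n-3}`. -/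
def pidx (n k : ℕ) : ℕ := if k ≤ n - 2 then k else k + 2

/-- The family `f_a(z) = (z^n + a_{n-2} z^{n-2} + ⋯ + a_1 z + a_0) /
(1 - a_{n+1} z - a_{n+2} z^2 - ⋯ - a_{2n-1} z^{n-1})`, where the parameter coordinate
`k ∈ {0,…,n-2}` stores `a_k` and the parameter coordinate `n-1+i ∈ {n-1,…,2n-3}`
stores `a_{n+1+i}`. -/
noncomputable def Fam (n : ℕ) (a : Fin (2 * n - 2) → ℂ) (z : ℂ) : ℂ :=
  (z ^ n + ∑ i ∈ Finset.range (n - 1), coeffs n a i * z ^ i) /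
    (1 - ∑ i ∈ Finset.range (n - 1), coeffs n a (n - 1 + i) * z ^ (i + 1))

open Finset Filter Function Topology

section PartialDeriv

variable {E : Type*} [NormedAddCommGroup E] [NormedSpace ℂ E]

theorem DifferentiableAt.deriv_eq_fderiv_uncurry {f : E → ℂ → ℂ} {a : E} {w : ℂ}
    (h : DifferentiableAt ℂ (uncurry f) (a, w)) :
    deriv (f a) w = fderiv ℂ (uncurry f) (a, w) (0, 1) :=
  (h.hasFDerivAt.comp_hasDerivAt w ((hasDerivAt_const w a).prodMk (hasDerivAt_id w))).deriv

theorem DifferentiableAt.deriv_fst_eq_fderiv_uncurry {f : ℂ → ℂ → ℂ} {t w : ℂ}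
    (h : DifferentiableAt ℂ (uncurry f) (t, w)) :
    deriv (fun s => f s w) t = fderiv ℂ (uncurry f) (t, w) (1, 0) :=
  (h.hasFDerivAt.comp_hasDerivAt (l := uncurry f) t
    ((hasDerivAt_id t).prodMk (hasDerivAt_const t w))).deriv

theorem DifferentiableAt.differentiableAt_of_uncurry {f : E → ℂ → ℂ} {a : E} {w : ℂ}
    (h : DifferentiableAt ℂ (uncurry f) (a, w)) : DifferentiableAt ℂ (f a) w :=
  h.comp w ((differentiableAt_const a).prodMk differentiableAt_id)

theorem AnalyticAt.uncurry_deriv {f : E → ℂ → ℂ} {p : E × ℂ}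
    (h : AnalyticAt ℂ (uncurry f) p) : AnalyticAt ℂ (uncurry fun a => deriv (f a)) p := by
  have hD : AnalyticAt ℂ (fun q => fderiv ℂ (uncurry f) q (0, 1)) p :=
    (ContinuousLinearMap.apply ℂ ℂ ((0 : E), (1 : ℂ))).analyticAt _ |>.comp h.fderiv
  refine hD.congr ?_
  filter_upwards [h.eventually_analyticAt] with q hq
  exact hq.differentiableAt.deriv_eq_fderiv_uncurry.symm

theorem hasDerivAt_comp_uncurry {f : ℂ → ℂ → ℂ} {ω : ℂ → ℂ} {ω' t : ℂ}
    (hf : DifferentiableAt ℂ (uncurry f) (t, ω t)) (hω : HasDerivAt ω ω' t) :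
    HasDerivAt (fun s => f s (ω s))
      (deriv (fun s => f s (ω t)) t + deriv (f t) (ω t) * ω') t := by
  have h := hf.hasFDerivAt.comp_hasDerivAt t ((hasDerivAt_id t).prodMk hω)
  have hsplit : ((1 : ℂ), ω') = (1, 0) + ω' • (0, 1) := by simp
  rw [hsplit, map_add, map_smul, smul_eq_mul, mul_comm, ← hf.deriv_fst_eq_fderiv_uncurry,
    ← hf.deriv_eq_fderiv_uncurry] at h
  exact h

theorem AnalyticAt.deriv_deriv_comm {f : ℂ → ℂ → ℂ} {t w : ℂ}
    (h : AnalyticAt ℂ (uncurry f) (t, w)) :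
    deriv (fun s => deriv (f s) w) t = deriv (fun v => deriv (fun s => f s v) t) w := by
  have hD : HasFDerivAt (fderiv ℂ (uncurry f)) (fderiv ℂ (fderiv ℂ (uncurry f)) (t, w)) (t, w) :=
    h.fderiv.differentiableAt.hasFDerivAt
  have hnear : ∀ᶠ q in 𝓝 (t, w), DifferentiableAt ℂ (uncurry f) q :=
    h.eventually_analyticAt.mono fun q hq => hq.differentiableAt
  have h₁ : deriv (fun s => deriv (f s) w) t =
      fderiv ℂ (fderiv ℂ (uncurry f)) (t, w) (1, 0) (0, 1) := by
    have hl : HasDerivAt (fun s => (s, w)) ((1 : ℂ), (0 : ℂ)) t :=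
      (hasDerivAt_id t).prodMk (hasDerivAt_const t w)
    have hev : (fun s => deriv (f s) w) =ᶠ[𝓝 t] fun s => fderiv ℂ (uncurry f) (s, w) (0, 1) :=
      (hl.continuousAt.eventually hnear).mono fun s hs => hs.deriv_eq_fderiv_uncurry
    have hc : HasDerivAt (fun s => fderiv ℂ (uncurry f) (s, w))
        (fderiv ℂ (fderiv ℂ (uncurry f)) (t, w) (1, 0)) t := hD.comp_hasDerivAt t hl
    rw [hev.deriv_eq, (hc.clm_apply (hasDerivAt_const t ((0 : ℂ), (1 : ℂ)))).deriv]
    simp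
  have h₂ : deriv (fun v => deriv (fun s => f s v) t) w =
      fderiv ℂ (fderiv ℂ (uncurry f)) (t, w) (0, 1) (1, 0) := by
    have hl : HasDerivAt (fun v => (t, v)) ((0 : ℂ), (1 : ℂ)) w :=
      (hasDerivAt_const w t).prodMk (hasDerivAt_id w)
    have hev : (fun v => deriv (fun s => f s v) t) =ᶠ[𝓝 w]
        fun v => fderiv ℂ (uncurry f) (t, v) (1, 0) :=
      (hl.continuousAt.eventually hnear).mono fun v hv => hv.deriv_fst_eq_fderiv_uncurry
    have hc : HasDerivAt (fun v => fderiv ℂ (uncurry f) (t, v))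
        (fderiv ℂ (fderiv ℂ (uncurry f)) (t, w) (0, 1)) w := hD.comp_hasDerivAt w hl
    rw [hev.deriv_eq, (hc.clm_apply (hasDerivAt_const w ((1 : ℂ), (0 : ℂ)))).deriv]
    simp
  rw [h₁, h₂]
  exact h.contDiffAt.isSymmSndFDerivAt_of_omega _ _

end PartialDeriv

section Orbit

theorem hasDerivAt_iterate_of_differentiableAt_orbit {f : ℂ → ℂ} {x : ℂ} {m : ℕ}
    (hf : ∀ l < m, DifferentiableAt ℂ f (f^[l] x)) :
    HasDerivAt f^[m] (∏ l ∈ range m, deriv f (f^[l] x)) x := by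
  induction m with
  | zero => simpa using hasDerivAt_id x
  | succ m ih =>
    rw [iterate_succ', prod_range_succ, mul_comm]
    exact (hf m m.lt_succ_self).hasDerivAt.comp x (ih fun l hl => hf l (by omega))

variable {E : Type*}

def orbitPoint (f : E → ℂ → ℂ) (z : E → ℂ) (l : ℕ) (a : E) : ℂ := (f a)^[l] (z a)

noncomputable def multiplier (f : E → ℂ → ℂ) (z : E → ℂ) (m : ℕ) (a : E) : ℂ :=
  deriv (f a)^[m] (z a)

theorem orbitPoint_succ (f : E → ℂ → ℂ) (z : E → ℂ) (l : ℕ) :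
    orbitPoint f z (l + 1) = fun a => f a (orbitPoint f z l a) :=
  funext fun _ => iterate_succ_apply' _ _ _

variable [NormedAddCommGroup E] [NormedSpace ℂ E] {f : E → ℂ → ℂ} {z : E → ℂ} {a₀ : E}

theorem differentiableAt_orbitPoint (hf : ∀ w, AnalyticAt ℂ (uncurry f) (a₀, w))
    (hz : DifferentiableAt ℂ z a₀) (l : ℕ) : DifferentiableAt ℂ (orbitPoint f z l) a₀ := by
  induction l with
  | zero => exact hz
  | succ l ih =>
    rw [orbitPoint_succ]
    exact (hf _).differentiableAt.comp (g := uncurry f) a₀ (differentiableAt_id.prodMk ih)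

theorem eventually_analyticAt_orbitPoint (hf : ∀ w, AnalyticAt ℂ (uncurry f) (a₀, w))
    (hz : DifferentiableAt ℂ z a₀) (l : ℕ) :
    ∀ᶠ a in 𝓝 a₀, AnalyticAt ℂ (uncurry f) (a, orbitPoint f z l a) :=
  (continuousAt_id.prodMk (differentiableAt_orbitPoint hf hz l).continuousAt).eventually
    (hf _).eventually_analyticAt

theorem multiplier_eventuallyEq_prod (hf : ∀ w, AnalyticAt ℂ (uncurry f) (a₀, w))
    (hz : DifferentiableAt ℂ z a₀) (m : ℕ) :
    multiplier f z m =ᶠ[𝓝 a₀] fun a => ∏ l ∈ range m, deriv (f a) (orbitPoint f z l a) := by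
  filter_upwards [(eventually_all_finset _).mpr fun l _ =>
    eventually_analyticAt_orbitPoint hf hz l] with a ha
  exact (hasDerivAt_iterate_of_differentiableAt_orbit fun l hl =>
    (ha l (mem_range.mpr hl)).differentiableAt.differentiableAt_of_uncurry).deriv

theorem differentiableAt_multiplier (hf : ∀ w, AnalyticAt ℂ (uncurry f) (a₀, w))
    (hz : DifferentiableAt ℂ z a₀) (m : ℕ) : DifferentiableAt ℂ (multiplier f z m) a₀ := by
  refine DifferentiableAt.congr_of_eventuallyEq ?_ (multiplier_eventuallyEq_prod hf hz m)
  refine (HasFDerivAt.finsetProd fun l _ => DifferentiableAt.hasFDerivAt ?_).differentiableAt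
  exact ((hf _).uncurry_deriv.differentiableAt).comp (g := uncurry fun a => deriv (f a)) a₀
    (differentiableAt_id.prodMk (differentiableAt_orbitPoint hf hz l))

end Orbit

theorem natCast_mul_pow_sub_one {x : ℂ} (hx : x ≠ 0) (k : ℕ) :
    (k : ℂ) * x ^ (k - 1) = k * x ^ k / x := by
  rcases k with _ | k
  · simp
  · rw [Nat.add_sub_cancel, pow_succ]
    field_simp

theorem deriv_pow_iterate_of_pow_eq_self {n m : ℕ} {z₀ : ℂ} (hn : n ≠ 0) (hz₀ : z₀ ≠ 0)
    (hper : z₀ ^ n ^ m = z₀) : deriv (fun w : ℂ => w ^ n)^[m] z₀ = n ^ m := by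
  have hunit : z₀ ^ (n ^ m - 1) = 1 := by
    rw [← mul_left_inj' hz₀, pow_sub_one_mul (pow_ne_zero m hn), hper, one_mul]
  rw [pow_iterate, deriv_pow_field, hunit]
  push_cast
  ring

theorem sum_logDeriv_eq_of_periodic {n j m : ℕ} {Z d : ℕ → ℂ} (hn : n ≠ 0) (hZ : ∀ l, Z l ≠ 0)
    (hZsucc : ∀ l, Z (l + 1) = Z l ^ n) (hZm : Z m = Z 0)
    (hd : ∀ l, d (l + 1) = Z l ^ j + n * Z l ^ (n - 1) * d l) (hdm : d m = d 0) :
    ∑ l ∈ range m,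
        (j * Z l ^ (j - 1) + n * ((n - 1 : ℕ) * Z l ^ (n - 1 - 1)) * d l) / (n * Z l ^ (n - 1)) =
      ((j : ℂ) / n - 1) * ∑ l ∈ range m, Z l ^ j / Z l ^ n := by
  have hnC : (n : ℂ) ≠ 0 := Nat.cast_ne_zero.mpr hn
  have hcast : ((n - 1 : ℕ) : ℂ) = n - 1 := by rw [Nat.cast_sub (by omega), Nat.cast_one]
  set T : ℕ → ℂ := fun l => d l / Z l
  have hT : ∀ l, T (l + 1) - T l = Z l ^ j / Z l ^ n + (n - 1) * T l := by
    intro l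
    have hZl := hZ l
    simp only [T, hd, hZsucc, natCast_mul_pow_sub_one hZl]
    field_simp
    ring
  have hterm : ∀ l ∈ range m,
      (j * Z l ^ (j - 1) + n * ((n - 1 : ℕ) * Z l ^ (n - 1 - 1)) * d l) / (n * Z l ^ (n - 1)) =
        (j : ℂ) / n * (Z l ^ j / Z l ^ n) + (n - 1) * T l := by
    intro l _
    have hZl := hZ l
    rw [natCast_mul_pow_sub_one hZl (n - 1), natCast_mul_pow_sub_one hZl n,
      natCast_mul_pow_sub_one hZl j, hcast, ← pow_sub_one_mul hn]
    simp only [T]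
    field_simp
  have htele := sum_range_sub T m
  simp only [hT, T, hZm, hdm, sub_self, sum_add_distrib, ← mul_sum] at htele
  rw [sum_congr rfl hterm, sum_add_distrib, ← mul_sum, ← mul_sum]
  linear_combination htele

structure IsPowPerturbation (n j : ℕ) (Ψ : ℂ → ℂ → ℂ) : Prop where
  analyticAt : ∀ w, AnalyticAt ℂ (uncurry Ψ) (0, w)
  eq_pow : Ψ 0 = fun w => w ^ n
  hasDerivAt_param : ∀ w, HasDerivAt (fun t => Ψ t w) (w ^ j) 0

namespace IsPowPerturbation

variable {n j : ℕ} {Ψ : ℂ → ℂ → ℂ} {ζ : ℂ → ℂ}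

theorem hasDerivAt_apply_comp (hΨ : IsPowPerturbation n j Ψ) {ω : ℂ → ℂ} {d : ℂ}
    (hω : HasDerivAt ω d 0) :
    HasDerivAt (fun t => Ψ t (ω t)) (ω 0 ^ j + n * ω 0 ^ (n - 1) * d) 0 := by
  have h := hasDerivAt_comp_uncurry (hΨ.analyticAt (ω 0)).differentiableAt hω
  rwa [(hΨ.hasDerivAt_param _).deriv, hΨ.eq_pow, deriv_pow_field] at h

theorem hasDerivAt_deriv_comp (hΨ : IsPowPerturbation n j Ψ) {ω : ℂ → ℂ} {d : ℂ}
    (hω : HasDerivAt ω d 0) :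
    HasDerivAt (fun t => deriv (Ψ t) (ω t))
      (j * ω 0 ^ (j - 1) + n * ((n - 1 : ℕ) * ω 0 ^ (n - 1 - 1)) * d) 0 := by
  have h := hasDerivAt_comp_uncurry (f := fun t => deriv (Ψ t))
    (hΨ.analyticAt (ω 0)).uncurry_deriv.differentiableAt hω
  have hmixed : deriv (fun s => deriv (Ψ s) (ω 0)) 0 = j * ω 0 ^ (j - 1) := by
    simp only [(hΨ.analyticAt (ω 0)).deriv_deriv_comm, fun v => (hΨ.hasDerivAt_param v).deriv,
      deriv_pow_field]
  have hpow : deriv (fun w : ℂ => w ^ n) = fun w => (n : ℂ) * w ^ (n - 1) :=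
    funext fun w => deriv_pow_field n
  simpa only [hmixed, hΨ.eq_pow, hpow, deriv_const_mul_field', deriv_pow_field] using h

theorem orbitPoint_zero (hΨ : IsPowPerturbation n j Ψ) (l : ℕ) :
    orbitPoint Ψ ζ l 0 = ζ 0 ^ n ^ l := by
  simp only [orbitPoint, hΨ.eq_pow, pow_iterate]

theorem deriv_orbitPoint_succ (hΨ : IsPowPerturbation n j Ψ) (hζ : DifferentiableAt ℂ ζ 0)
    (l : ℕ) :
    deriv (orbitPoint Ψ ζ (l + 1)) 0 =
      (ζ 0 ^ n ^ l) ^ j + n * (ζ 0 ^ n ^ l) ^ (n - 1) * deriv (orbitPoint Ψ ζ l) 0 := by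
  have h := hΨ.hasDerivAt_apply_comp (differentiableAt_orbitPoint hΨ.analyticAt hζ l).hasDerivAt
  rw [hΨ.orbitPoint_zero] at h
  rw [orbitPoint_succ, h.deriv]

theorem deriv_multiplier_eq_mul_sum (hΨ : IsPowPerturbation n j Ψ) (hn : n ≠ 0) {m : ℕ}
    (hζ : DifferentiableAt ℂ ζ 0) (hζ₀ : ζ 0 ≠ 0) (hper : ζ 0 ^ n ^ m = ζ 0) :
    deriv (multiplier Ψ ζ m) 0 = n ^ m * ∑ l ∈ range m,
      (j * (ζ 0 ^ n ^ l) ^ (j - 1) +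
          n * ((n - 1 : ℕ) * (ζ 0 ^ n ^ l) ^ (n - 1 - 1)) * deriv (orbitPoint Ψ ζ l) 0) /
        (n * (ζ 0 ^ n ^ l) ^ (n - 1)) := by
  have hfactor : ∀ l, HasDerivAt (fun t => deriv (Ψ t) (orbitPoint Ψ ζ l t))
      (j * (ζ 0 ^ n ^ l) ^ (j - 1) +
        n * ((n - 1 : ℕ) * (ζ 0 ^ n ^ l) ^ (n - 1 - 1)) * deriv (orbitPoint Ψ ζ l) 0) 0 := by
    intro l
    simpa only [hΨ.orbitPoint_zero] using
      hΨ.hasDerivAt_deriv_comp (differentiableAt_orbitPoint hΨ.analyticAt hζ l).hasDerivAt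
  have hfactor₀ : ∀ l, deriv (Ψ 0) (orbitPoint Ψ ζ l 0) = n * (ζ 0 ^ n ^ l) ^ (n - 1) := by
    intro l
    rw [hΨ.orbitPoint_zero, hΨ.eq_pow, deriv_pow_field]
  have hprod := multiplier_eventuallyEq_prod hΨ.analyticAt hζ m
  have hmult₀ : multiplier Ψ ζ m 0 = n ^ m := by
    rw [multiplier, hΨ.eq_pow, deriv_pow_iterate_of_pow_eq_self hn hζ₀ hper]
  calc deriv (multiplier Ψ ζ m) 0
      = multiplier Ψ ζ m 0 *
          logDeriv (fun t => ∏ l ∈ range m, deriv (Ψ t) (orbitPoint Ψ ζ l t)) 0 := by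
        rw [logDeriv_apply, ← hprod.eq_of_nhds, ← hprod.deriv_eq, hmult₀]
        field_simp
    _ = _ := by
        rw [hmult₀, logDeriv_prod (fun l _ => ?_) (fun l _ => (hfactor l).differentiableAt)]
        · simp only [logDeriv_apply, (hfactor _).deriv, hfactor₀]
        · rw [hfactor₀]
          exact mul_ne_zero (Nat.cast_ne_zero.mpr hn) (pow_ne_zero _ (pow_ne_zero _ hζ₀))

theorem deriv_multiplier (hΨ : IsPowPerturbation n j Ψ) (hn : n ≠ 0) {m : ℕ} (hm : 1 ≤ m)
    (hζ : DifferentiableAt ℂ ζ 0) (hζ₀ : ζ 0 ≠ 0) (hper : ζ 0 ^ n ^ m = ζ 0)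
    (hfix : orbitPoint Ψ ζ m =ᶠ[𝓝 0] ζ) :
    deriv (multiplier Ψ ζ m) 0 =
      ((j : ℂ) * n ^ (m - 1) - n ^ m) * ∑ i ∈ range m, ζ 0 ^ ((n : ℤ) ^ i * ((j : ℤ) - n)) := by
  have hterm : ∀ l ∈ range m,
      (ζ 0 ^ n ^ l) ^ j / (ζ 0 ^ n ^ l) ^ n = ζ 0 ^ ((n : ℤ) ^ l * ((j : ℤ) - n)) := by
    intro l _
    rw [zpow_mul, zpow_sub₀ (zpow_ne_zero _ hζ₀), zpow_natCast, zpow_natCast,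
      ← Nat.cast_pow, zpow_natCast]
  rw [hΨ.deriv_multiplier_eq_mul_sum hn hζ hζ₀ hper,
    sum_logDeriv_eq_of_periodic hn (fun l => pow_ne_zero _ hζ₀)
      (fun l => by rw [pow_succ, pow_mul]) (by rw [hper, pow_zero, pow_one])
      (hΨ.deriv_orbitPoint_succ hζ) hfix.deriv_eq,
    sum_congr rfl hterm, ← pow_sub_one_mul (by omega : m ≠ 0)]
  field_simp

end IsPowPerturbation

section RationalFamily

variable {n : ℕ}

theorem analyticAt_uncurry_Fam (w : ℂ) : AnalyticAt ℂ (uncurry (Fam n)) (0, w) := by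
  have hc : ∀ i, AnalyticAt ℂ (fun p : (Fin (2 * n - 2) → ℂ) × ℂ => coeffs n p.1 i) (0, w) := by
    intro i
    unfold coeffs
    split
    · exact (ContinuousLinearMap.proj (R := ℂ) (φ := fun _ : Fin (2 * n - 2) => ℂ) _).analyticAt _
        |>.comp analyticAt_fst
    · exact analyticAt_const
  refine AnalyticAt.div ?_ ?_ (by simp [coeffs])
  · exact (analyticAt_snd.pow n).add
      (Finset.analyticAt_fun_sum _ fun i _ => (hc i).mul (analyticAt_snd.pow i))
  · exact analyticAt_const.sub
      (Finset.analyticAt_fun_sum _ fun i _ => (hc _).mul (analyticAt_snd.pow _))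

theorem analyticAt_uncurry_Fam_smul (v : Fin (2 * n - 2) → ℂ) (w : ℂ) :
    AnalyticAt ℂ (uncurry fun t : ℂ => Fam n (t • v)) (0, w) := by
  have hlin : AnalyticAt ℂ (fun p : ℂ × ℂ => (p.1 • v, p.2)) (0, w) :=
    (analyticAt_fst.smul analyticAt_const).prod analyticAt_snd
  have h := analyticAt_uncurry_Fam (n := n) w
  rw [← zero_smul ℂ v] at h
  exact AnalyticAt.comp (x := ((0 : ℂ), w)) h hlin

theorem Fam_zero : Fam n 0 = fun w => w ^ n := by
  funext w
  simp [Fam, coeffs]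

theorem coeffs_smul_single (k : Fin (2 * n - 2)) (t : ℂ) (i : ℕ) :
    coeffs n (t • Pi.single k 1) i = if i = k then t else 0 := by
  unfold coeffs
  split_ifs with hi hik hik <;> simp_all [Fin.ext_iff]

theorem Fam_smul_single_of_le {k : Fin (2 * n - 2)} (hk : (k : ℕ) ≤ n - 2) (t w : ℂ) :
    Fam n (t • Pi.single k 1) w = w ^ n + t * w ^ (k : ℕ) := by
  have hkn : (k : ℕ) < n - 1 := by have := k.isLt; omega
  have hden : ∀ i, n - 1 + i ≠ (k : ℕ) := fun i => by omega
  simp [Fam, coeffs_smul_single, hkn, hden]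

theorem Fam_smul_single_of_lt {k : Fin (2 * n - 2)} (hk : n - 2 < (k : ℕ)) (t w : ℂ) :
    Fam n (t • Pi.single k 1) w = w ^ n / (1 - t * w ^ ((k : ℕ) + 2 - n)) := by
  have hnum : ¬ (k : ℕ) < n - 1 := by omega
  have hden : ∀ i, n - 1 + i = (k : ℕ) ↔ i = (k : ℕ) + 1 - n := fun i => by omega
  have hmem : (k : ℕ) + 1 - n < n - 1 := by have := k.isLt; omega
  have hexp : (k : ℕ) + 1 - n + 1 = (k : ℕ) + 2 - n := by omega
  simp [Fam, coeffs_smul_single, hnum, hden, hmem, hexp]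

theorem hasDerivAt_Fam_smul_single (k : Fin (2 * n - 2)) (w : ℂ) :
    HasDerivAt (fun t : ℂ => Fam n (t • Pi.single k 1) w) (w ^ pidx n (k : ℕ)) 0 := by
  unfold pidx
  split_ifs with hk
  · simp only [Fam_smul_single_of_le hk]
    simpa using ((hasDerivAt_id (0 : ℂ)).mul_const (w ^ (k : ℕ))).const_add (w ^ n)
  · set q := (k : ℕ) + 2 - n
    simp only [Fam_smul_single_of_lt (not_le.mp hk)]
    have hden : HasDerivAt (fun t : ℂ => 1 - t * w ^ q) (-w ^ q) 0 := by
      simpa using ((hasDerivAt_id (0 : ℂ)).mul_const (w ^ q)).const_sub 1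
    refine ((hasDerivAt_const (0 : ℂ) (w ^ n)).div hden (by simp)).congr_deriv ?_
    rw [show (k : ℕ) + 2 = n + q by omega, pow_add]
    simp

theorem isPowPerturbation_Fam_smul_single (k : Fin (2 * n - 2)) :
    IsPowPerturbation n (pidx n (k : ℕ)) fun t => Fam n (t • Pi.single k 1) where
  analyticAt := analyticAt_uncurry_Fam_smul _
  eq_pow := by simp [Fam_zero]
  hasDerivAt_param := hasDerivAt_Fam_smul_single k

end RationalFamily

theorem multiplier_partial_deriv_general (n m : ℕ) (hn : 2 ≤ n) (hm : 1 ≤ m)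
    (z0 : ℂ) (hz0 : z0 ≠ 0)
    (hper : (fun w : ℂ => w ^ n)^[m] z0 = z0)
    (U : Set (Fin (2 * n - 2) → ℂ)) (hU : U ∈ nhds (0 : Fin (2 * n - 2) → ℂ))
    (z : (Fin (2 * n - 2) → ℂ) → ℂ) (hzhol : DifferentiableOn ℂ z U)
    (hz00 : z 0 = z0)
    (hfix : ∀ a ∈ U, (Fam n a)^[m] (z a) = z a)
    (k : Fin (2 * n - 2)) :
    fderiv ℂ (fun a => deriv ((Fam n a)^[m]) (z a)) 0 (Pi.single k 1) =
      ((pidx n (k : ℕ) : ℂ) * (n : ℂ) ^ (m - 1) - (n : ℂ) ^ m) *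
        ∑ i ∈ Finset.range m, z0 ^ ((n : ℤ) ^ i * ((pidx n (k : ℕ) : ℤ) - (n : ℤ))) := by
  set e : Fin (2 * n - 2) → ℂ := Pi.single k 1
  have hline : HasDerivAt (fun t : ℂ => t • e) e 0 := by
    simpa using (hasDerivAt_id (0 : ℂ)).smul_const e
  have hline₀ : (fun t : ℂ => t • e) 0 = 0 := zero_smul ℂ e
  have hz : DifferentiableAt ℂ z 0 := hzhol.differentiableAt hU
  have hmult := (differentiableAt_multiplier analyticAt_uncurry_Fam hz m).hasFDerivAt
  have hζ₀ : z ((fun t : ℂ => t • e) 0) = z0 := by rw [hline₀, hz00]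
  change fderiv ℂ (multiplier (Fam n) z m) 0 e = _
  rw [← (hmult.comp_hasDerivAt_of_eq 0 hline hline₀.symm).deriv, ← hζ₀]
  have hfix' : ∀ᶠ t in 𝓝 (0 : ℂ), (Fam n (t • e))^[m] (z (t • e)) = z (t • e) :=
    hline.continuousAt.eventually (hline₀ ▸ eventually_of_mem hU hfix)
  rw [← hline₀] at hz
  rw [pow_iterate, ← hζ₀] at hper
  exact (isPowPerturbation_Fam_smul_single k).deriv_multiplier (by omega) hm
    (hz.comp 0 hline.differentiableAt) (hζ₀ ▸ hz0) hper hfix'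

/-- Lemma 4.1 (computation of the partial derivatives of the multiplier of a periodic
orbit of `f_0(z) = z^n` in the family `f_a`): for every parameter coordinate `k`, with
corresponding coefficient index `j = pidx n k` (which ranges exactly over
`0 ≤ j ≤ 2n-1`, `j ≠ n-1`, `j ≠ n`),
`∂λ_{z_0}/∂a_j (0) = (j n^{m-1} - n^m) ∑_{i=0}^{m-1} z_0^{n^i (j-n)}`. -/
theorem multiplier_partial_deriv (n m : ℕ) (hn : 2 ≤ n) (hm : 1 ≤ m)
    (z0 : ℂ) (hz0 : z0 ≠ 0)
    (hper : (fun w : ℂ => w ^ n)^[m] z0 = z0)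
    (hmin : ∀ r, 1 ≤ r → r < m → (fun w : ℂ => w ^ n)^[r] z0 ≠ z0)
    (U : Set (Fin (2 * n - 2) → ℂ)) (hU : U ∈ nhds (0 : Fin (2 * n - 2) → ℂ))
    (z : (Fin (2 * n - 2) → ℂ) → ℂ) (hzhol : DifferentiableOn ℂ z U)
    (hz00 : z 0 = z0)
    (hfix : ∀ a ∈ U, (Fam n a)^[m] (z a) = z a)
    (k : Fin (2 * n - 2)) :
    fderiv ℂ (fun a => deriv ((Fam n a)^[m]) (z a)) 0 (Pi.single k 1) =
      ((pidx n (k : ℕ) : ℂ) * (n : ℂ) ^ (m - 1) - (n : ℂ) ^ m) *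
        ∑ i ∈ Finset.range m, z0 ^ ((n : ℤ) ^ i * ((pidx n (k : ℕ) : ℤ) - (n : ℤ))) :=
  multiplier_partial_deriv_general n m hn hm z0 hz0 hper U hU z hzhol hz00 hfix k
end

section
/- Let n ≥ 2, m ≥ 1 and j ≥ 0 be integers, and let z_0 ∈ ℂ be a periodic point of minimal period m of the map f_0(w) = w^n with z_0 ≠ 0. For a ∈ ℂ define the polynomial map f_{a,j}(z) = z^n + a·z^j. Suppose z(·) is a holomorphic function on a neighborhood of 0 in ℂ such that z(0) = z_0 and f_{a,j}^{∘m}(z(a)) = z(a) for all a in that neighborhood, and let μ(a) denote the derivative of the m-th iterate f_{a,j}^{∘m} at the point z(a). Then μ'(0) = (j·n^{m−1} − n^m)·Σ_{i=0}^{m−1} z_0^{n^i(j−n)}, where the powers of the nonzero number z_0 are integer powers (possibly negative). -/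
/-!
Write `f_a(w) = w^n + a w^j` and `z_i(a) = f_a^{∘i}(z(a))`, and let `d_i = z_i'(0) / z_i(0)` be the
logarithmic derivatives of the orbit points. Differentiating `z_{i+1} = z_i^n + a z_i^j` gives
`d_{i+1} = n d_i + z_i(0)^{j-n}`, and `z_m = z` forces `d_m = d_0`; summing the recurrence over one
period yields `(n - 1) ∑ d_i = -∑ z_i(0)^{j-n}`. The multiplier is `μ(a) = ∏ f_a'(z_i(a))`, with
`μ(0) = n^m` and logarithmic derivative `∑ ((n - 1) d_i + (j / n) z_i(0)^{j-n})` at `0`, which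
combine to the stated formula.
-/

open Finset

variable {𝕜 : Type*} [NontriviallyNormedField 𝕜]

theorem deriv_iterate_eq_prod {f : 𝕜 → 𝕜} (hf : Differentiable 𝕜 f) (k : ℕ) (x : 𝕜) :
    deriv f^[k] x = ∏ i ∈ range k, deriv f (f^[i] x) := by
  induction k with
  | zero => simp
  | succ k ih =>
    rw [Function.iterate_succ', prod_range_succ, ← ih,
      deriv_comp x (hf _) ((hf.iterate k) x), mul_comm]

theorem HasDerivAt.fun_finsetProd_of_logDeriv {ι : Type*} {𝔸 : Type*} [NormedCommRing 𝔸]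
    [NormedAlgebra 𝕜 𝔸] {s : Finset ι} {f : ι → 𝕜 → 𝔸} {L : ι → 𝔸} {x : 𝕜}
    (hf : ∀ i ∈ s, HasDerivAt (f i) (f i x * L i) x) :
    HasDerivAt (∏ i ∈ s, f i ·) ((∏ i ∈ s, f i x) * ∑ i ∈ s, L i) x := by
  classical
  convert HasDerivAt.fun_finsetProd hf using 1
  rw [mul_sum]
  refine sum_congr rfl fun i hi => ?_
  rw [smul_eq_mul, ← mul_assoc, prod_erase_mul _ _ hi]

theorem sub_one_mul_sum_range_of_periodic {R : Type*} [CommRing R] {d s : ℕ → R} {r : R}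
    {m : ℕ} (hd : ∀ i, d (i + 1) = r * d i + s i) (hm : d m = d 0) :
    (r - 1) * ∑ i ∈ range m, d i = -∑ i ∈ range m, s i := by
  have hshift : ∑ i ∈ range m, d (i + 1) = ∑ i ∈ range m, d i := by
    have h := (sum_range_succ' d m).symm.trans (sum_range_succ d m)
    rwa [hm, add_left_inj] at h
  simp only [hd, sum_add_distrib, ← mul_sum] at hshift
  linear_combination hshift

theorem deriv_pow_eq_of_pow_eq_self {x : 𝕜} (hx : x ≠ 0) {N : ℕ} (h : x ^ N = x) :
    deriv (· ^ N) x = N := by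
  rcases N with _ | N
  · simp
  · rw [deriv_pow_field, Nat.add_sub_cancel, ← mul_left_inj' hx, mul_assoc, ← pow_succ, h]

def perturbedPow (n j : ℕ) (a w : 𝕜) : 𝕜 := w ^ n + a * w ^ j

section PerturbedPow

variable (n j : ℕ)

theorem perturbedPow_zero : perturbedPow n j (0 : 𝕜) = (· ^ n) := by
  ext w
  simp [perturbedPow]

theorem hasDerivAt_perturbedPow (a x : 𝕜) :
    HasDerivAt (perturbedPow n j a) (n * x ^ (n - 1) + a * (j * x ^ (j - 1))) x :=
  (hasDerivAt_pow n x).add ((hasDerivAt_pow j x).const_mul a)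

theorem deriv_perturbedPow (a x : 𝕜) :
    deriv (perturbedPow n j a) x = n * x ^ (n - 1) + a * (j * x ^ (j - 1)) :=
  (hasDerivAt_perturbedPow n j a x).deriv

theorem differentiable_perturbedPow (a : 𝕜) : Differentiable 𝕜 (perturbedPow n j a) :=
  fun x => (hasDerivAt_perturbedPow n j a x).differentiableAt

variable {n j} {P : 𝕜 → 𝕜} {d : 𝕜}

theorem hasDerivAt_perturbedPow_comp (hP : HasDerivAt P (P 0 * d) 0) (hP0 : P 0 ≠ 0) :
    HasDerivAt (fun a => perturbedPow n j a (P a))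
      (P 0 ^ n * (n * d + P 0 ^ ((j : ℤ) - n))) 0 := by
  refine ((hP.fun_pow n).fun_add ((hasDerivAt_id 0).fun_mul (hP.fun_pow j))).congr_deriv ?_
  rw [zpow_sub₀ hP0, zpow_natCast, zpow_natCast]
  rcases n with _ | n
  · simp
  · simp only [Nat.add_sub_cancel, pow_succ]
    field_simp
    ring

theorem hasDerivAt_deriv_perturbedPow_comp (hn : (n : 𝕜) ≠ 0) (hP : HasDerivAt P (P 0 * d) 0)
    (hP0 : P 0 ≠ 0) :
    HasDerivAt (fun a => deriv (perturbedPow n j a) (P a))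
      (deriv (perturbedPow n j 0) (P 0) * ((n - 1) * d + j / n * P 0 ^ ((j : ℤ) - n))) 0 := by
  simp only [deriv_perturbedPow]
  refine (((hP.fun_pow (n - 1)).const_mul (n : 𝕜)).fun_add
    ((hasDerivAt_id 0).fun_mul ((hP.fun_pow (j - 1)).const_mul (j : 𝕜)))).congr_deriv ?_
  rw [zpow_sub₀ hP0, zpow_natCast, zpow_natCast]
  rcases n with _ | _ | n
  · simp at hn
  all_goals
    rcases j with _ | j
    all_goals
      simp only [id, Nat.add_sub_cancel, pow_succ]
      push_cast at hn ⊢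
      field_simp
      ring

theorem perturbedPow_zero_iterate (i : ℕ) : (perturbedPow n j (0 : 𝕜))^[i] = (· ^ n ^ i) := by
  rw [perturbedPow_zero, pow_iterate]

theorem perturbedPow_zero_iterate_ne_zero {w : 𝕜} (hw : w ≠ 0) (i : ℕ) :
    (perturbedPow n j 0)^[i] w ≠ 0 := by
  simpa only [perturbedPow_zero_iterate] using pow_ne_zero _ hw

theorem perturbedPow_zero_iterate_zpow (i : ℕ) (w : 𝕜) (k : ℤ) :
    ((perturbedPow n j 0)^[i] w) ^ k = w ^ ((n : ℤ) ^ i * k) := by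
  simp only [perturbedPow_zero_iterate, ← zpow_natCast, ← zpow_mul]
  norm_cast

/-- `d_i = z_i'(0) / z_i(0)`, computed through its recurrence from `z₀ = z(0)` and `d₀ = d_0`. -/
def orbitLogDeriv (n j : ℕ) (z₀ d₀ : 𝕜) : ℕ → 𝕜
  | 0 => d₀
  | i + 1 => n * orbitLogDeriv n j z₀ d₀ i + z₀ ^ ((n : ℤ) ^ i * (j - n))

theorem hasDerivAt_perturbedPow_iterate {z : 𝕜 → 𝕜} (hz0 : z 0 ≠ 0)
    (hz : HasDerivAt z (z 0 * d) 0) (i : ℕ) :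
    HasDerivAt (fun a => (perturbedPow n j a)^[i] (z a))
      ((perturbedPow n j 0)^[i] (z 0) * orbitLogDeriv n j (z 0) d i) 0 := by
  induction i with
  | zero => exact hz
  | succ i ih =>
    simp only [Function.iterate_succ_apply']
    refine (hasDerivAt_perturbedPow_comp ih
      (perturbedPow_zero_iterate_ne_zero hz0 i)).congr_deriv ?_
    rw [perturbedPow_zero_iterate_zpow, orbitLogDeriv, perturbedPow_zero]

end PerturbedPow

theorem multiplier_deriv_poly_family_general (n m j : ℕ) (hn : 2 ≤ n) (hm : 1 ≤ m)
    (z0 : ℂ) (hz0 : z0 ≠ 0)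
    (U : Set ℂ) (hU : U ∈ nhds (0 : ℂ))
    (z : ℂ → ℂ) (hzhol : DifferentiableOn ℂ z U) (hz00 : z 0 = z0)
    (hfix : ∀ a ∈ U, (fun w : ℂ => w ^ n + a * w ^ j)^[m] (z a) = z a) :
    deriv (fun a => deriv ((fun w : ℂ => w ^ n + a * w ^ j)^[m]) (z a)) 0 =
      ((j : ℂ) * (n : ℂ) ^ (m - 1) - (n : ℂ) ^ m) *
        ∑ i ∈ Finset.range m, z0 ^ ((n : ℤ) ^ i * ((j : ℤ) - (n : ℤ))) := by
  change deriv (fun a => deriv (perturbedPow n j a)^[m] (z a)) 0 = _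
  subst hz00
  obtain ⟨d₀, hz⟩ : ∃ d₀, HasDerivAt z (z 0 * d₀) 0 :=
    ⟨deriv z 0 / z 0, by simpa [mul_div_cancel₀ _ hz0] using (hzhol.differentiableAt hU).hasDerivAt⟩
  have horbit := hasDerivAt_perturbedPow_iterate (n := n) (j := j) hz0 hz
  have hfix0 : (perturbedPow n j 0)^[m] (z 0) = z 0 := hfix 0 (mem_of_mem_nhds hU)
  have hperiodic : orbitLogDeriv n j (z 0) d₀ m = d₀ := by
    have hzm : (fun a => (perturbedPow n j a)^[m] (z a)) =ᶠ[nhds 0] z :=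
      Filter.eventually_of_mem hU hfix
    have h := (horbit m).unique (hz.congr_of_eventuallyEq hzm)
    rwa [hfix0, mul_right_inj' hz0] at h
  have hsum := sub_one_mul_sum_range_of_periodic (d := orbitLogDeriv n j (z 0) d₀)
    (s := fun i => z 0 ^ ((n : ℤ) ^ i * (j - n))) (fun i => rfl) hperiodic
  have hμ : ∀ a, deriv (perturbedPow n j a)^[m] (z a)
      = ∏ i ∈ range m, deriv (perturbedPow n j a) ((perturbedPow n j a)^[i] (z a)) :=
    fun a => deriv_iterate_eq_prod (differentiable_perturbedPow n j a) m (z a)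
  have hμ0 : deriv (perturbedPow n j 0)^[m] (z 0) = n ^ m := by
    rw [perturbedPow_zero_iterate] at hfix0 ⊢
    rw [deriv_pow_eq_of_pow_eq_self hz0 hfix0, Nat.cast_pow]
  have hn0 : (n : ℂ) ≠ 0 := Nat.cast_ne_zero.mpr (by omega)
  have hμ_deriv := HasDerivAt.fun_finsetProd_of_logDeriv (s := range m) fun i _ =>
    hasDerivAt_deriv_perturbedPow_comp (j := j) hn0 (horbit i)
      (perturbedPow_zero_iterate_ne_zero hz0 i)
  simp only [hμ]
  rw [hμ_deriv.deriv, ← hμ 0, hμ0, sum_add_distrib, ← mul_sum, ← mul_sum]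
  simp only [perturbedPow_zero_iterate_zpow]
  obtain ⟨m, rfl⟩ : ∃ k, m = k + 1 := ⟨m - 1, by omega⟩
  rw [Nat.add_sub_cancel, pow_succ]
  field_simp
  linear_combination (n : ℂ) * hsum

/-- Lemma 4.2 (Lemma 3.1 of [mult_n]): derivative of the multiplier of a periodic
orbit of `f_0(z) = z^n` in the one-parameter family `f_{a,j}(z) = z^n + a z^j`:
`μ'(0) = (j n^{m-1} - n^m) ∑_{i=0}^{m-1} z_0^{n^i (j-n)}`, the powers of the nonzero
number `z_0` being integer powers. -/
theorem multiplier_deriv_poly_family (n m j : ℕ) (hn : 2 ≤ n) (hm : 1 ≤ m)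
    (z0 : ℂ) (hz0 : z0 ≠ 0)
    (hper : (fun w : ℂ => w ^ n)^[m] z0 = z0)
    (hmin : ∀ r, 1 ≤ r → r < m → (fun w : ℂ => w ^ n)^[r] z0 ≠ z0)
    (U : Set ℂ) (hU : U ∈ nhds (0 : ℂ))
    (z : ℂ → ℂ) (hzhol : DifferentiableOn ℂ z U) (hz00 : z 0 = z0)
    (hfix : ∀ a ∈ U, (fun w : ℂ => w ^ n + a * w ^ j)^[m] (z a) = z a) :
    deriv (fun a => deriv ((fun w : ℂ => w ^ n + a * w ^ j)^[m]) (z a)) 0 =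
      ((j : ℂ) * (n : ℂ) ^ (m - 1) - (n : ℂ) ^ m) *
        ∑ i ∈ Finset.range m, z0 ^ ((n : ℤ) ^ i * ((j : ℤ) - (n : ℤ))) :=
  multiplier_deriv_poly_family_general n m j hn hm z0 hz0 U hU z hzhol hz00 hfix
end

section
/- Let n ≥ 2, m ≥ 1 be integers and let j be an integer with n+1 ≤ j ≤ 2n−2. Then the polynomial P_{n,j,m} is a nonzero polynomial of degree (j−n+1)·n^{m−1}, and for every z_0 ∈ ℂ with z_0 ≠ 0 and z_0^{n^m} = z_0 one has (j·n^{m−1} − n^m)·Σ_{i=0}^{m−1} z_0^{n^i(j−n)} = z_0^{−n^{m−1}}·P_{n,j,m}(z_0). -/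
/-! For `n < j` the polynomial `P_{n,j,m}` is the nonzero constant `(j - n) n^{m-1}` times a sum
of monomials whose exponents `n^i (j - n) + n^{m-1}` increase strictly with `i`, so the sum is monic
of degree equal to the top exponent. The evaluation identity only factors `z^{n^{m-1}}` out of
that sum. -/

/-- The polynomial `P_{n,j,m} ∈ ℂ[z]` from Proposition 4.3:
`P_{n,j,m}(z) = (j n^{m-1} - n^m)(z^{(j+1)n^{m-1}-1} + ∑_{i=0}^{m-2} z^{n^i(j-n)+n^{m-1}})`
for `0 ≤ j ≤ n-2` (where `n^i(j-n) + n^{m-1} = n^{m-1} - n^i (n-j)` is a nonnegative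
integer), `P_{n,j,m}(z) = (j n^{m-1} - n^m) ∑_{i=0}^{m-1} z^{n^i(j-n)+n^{m-1}}` for
`n+1 ≤ j ≤ 2n-2`, and
`P_{n,j,m}(z) = (j n^{m-1} - n^m)(z + ∑_{i=0}^{m-2} z^{n^i(n-1)+n^{m-1}})` for `j = 2n-1`. -/
noncomputable def P (n j m : ℕ) : Polynomial ℂ :=
  Polynomial.C ((j : ℂ) * (n : ℂ) ^ (m - 1) - (n : ℂ) ^ m) *
    (if j ≤ n - 2 then
      Polynomial.X ^ ((j + 1) * n ^ (m - 1) - 1) +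
        ∑ i ∈ Finset.range (m - 1), Polynomial.X ^ (n ^ (m - 1) - n ^ i * (n - j))
    else if j ≤ 2 * n - 2 then
      ∑ i ∈ Finset.range m, Polynomial.X ^ (n ^ i * (j - n) + n ^ (m - 1))
    else
      Polynomial.X +
        ∑ i ∈ Finset.range (m - 1), Polynomial.X ^ (n ^ i * (n - 1) + n ^ (m - 1)))

open Polynomial Finset

section MonomialSum

variable {R : Type*} [Semiring R] {e : ℕ → ℕ}

theorem degree_sum_X_pow_lt_of_strictMono [Nontrivial R] (he : StrictMono e) (k : ℕ) :
    (∑ i ∈ range k, (X : R[X]) ^ e i).degree < e k :=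
  (degree_sum_le _ _).trans_lt <| (Finset.sup_lt_iff (WithBot.bot_lt_coe _)).2 fun _ hi =>
    (degree_X_pow_le _).trans_lt (WithBot.coe_lt_coe.2 (he (mem_range.1 hi)))

theorem monic_sum_X_pow_of_strictMono (he : StrictMono e) (k : ℕ) :
    (∑ i ∈ range (k + 1), (X : R[X]) ^ e i).Monic := by
  nontriviality R
  rw [sum_range_succ]
  exact (monic_X_pow _).add_of_right (by simpa using degree_sum_X_pow_lt_of_strictMono he k)

theorem natDegree_sum_X_pow_of_strictMono [Nontrivial R] (he : StrictMono e) (k : ℕ) :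
    (∑ i ∈ range (k + 1), (X : R[X]) ^ e i).natDegree = e k := by
  rw [sum_range_succ, natDegree_add_eq_right_of_degree_lt, natDegree_X_pow]
  simpa using degree_sum_X_pow_lt_of_strictMono he k

end MonomialSum

theorem strictMono_pow_mul_add {n d : ℕ} (hn : 1 < n) (hd : 0 < d) (c : ℕ) :
    StrictMono fun i => n ^ i * d + c :=
  ((pow_right_strictMono₀ hn).mul_const hd).add_const c

theorem P_eq_of_lt_of_le {n j : ℕ} (hj1 : n < j) (hj2 : j ≤ 2 * n - 2) (m : ℕ) :
    P n j m = C ((j : ℂ) * (n : ℂ) ^ (m - 1) - (n : ℂ) ^ m) *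
      ∑ i ∈ range m, X ^ (n ^ i * (j - n) + n ^ (m - 1)) := by
  simp [P, show ¬ j ≤ n - 2 by omega, hj2]

theorem natCast_mul_pow_sub_pow_succ {R : Type*} [CommRing R] {n j : ℕ} (h : n ≤ j) (k : ℕ) :
    (j : R) * (n : R) ^ k - (n : R) ^ (k + 1) = ((j - n : ℕ) : R) * (n : R) ^ k := by
  rw [Nat.cast_sub h]
  ring

theorem P_mid_degree_and_eval_general (n m j : ℕ) (hm : 1 ≤ m)
    (hj1 : n + 1 ≤ j) (hj2 : j ≤ 2 * n - 2) :
    P n j m ≠ 0 ∧ (P n j m).natDegree = (j - n + 1) * n ^ (m - 1) ∧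
    ∀ z0 : ℂ, z0 ≠ 0 → z0 ^ (n ^ m) = z0 →
      ((j : ℂ) * (n : ℂ) ^ (m - 1) - (n : ℂ) ^ m) *
          ∑ i ∈ Finset.range m, z0 ^ ((n : ℤ) ^ i * ((j : ℤ) - (n : ℤ))) =
        z0 ^ (-((n : ℤ) ^ (m - 1))) * (P n j m).eval z0 := by
  obtain ⟨k, rfl⟩ : ∃ k, m = k + 1 := ⟨m - 1, by omega⟩
  have he := strictMono_pow_mul_add (show 1 < n by omega) (show 0 < j - n by omega) (n ^ k)
  have hc : (j : ℂ) * (n : ℂ) ^ k - (n : ℂ) ^ (k + 1) ≠ 0 := by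
    rw [natCast_mul_pow_sub_pow_succ (by omega)]
    exact mul_ne_zero (by norm_cast; omega) (pow_ne_zero _ (by norm_cast; omega))
  rw [P_eq_of_lt_of_le (by omega) hj2, Nat.add_sub_cancel]
  refine ⟨mul_ne_zero (C_ne_zero.2 hc) (monic_sum_X_pow_of_strictMono he k).ne_zero, ?_,
    fun z0 hz0 _ => ?_⟩
  · rw [natDegree_C_mul hc, natDegree_sum_X_pow_of_strictMono he]
    ring
  · have hexp : ∀ i, (n : ℤ) ^ i * ((j : ℤ) - n) = ((n ^ i * (j - n) : ℕ) : ℤ) := fun i => by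
      push_cast [Nat.cast_sub (show n ≤ j by omega)]
      ring
    have hshift : (n : ℤ) ^ k = ((n ^ k : ℕ) : ℤ) := by norm_cast
    simp only [hexp, hshift, zpow_natCast, zpow_neg, eval_mul, eval_C, eval_finsetSum, eval_pow,
      eval_X, pow_add, ← sum_mul]
    field_simp

/-- Proposition 4.3, case `n+1 ≤ j ≤ 2n-2`: `P_{n,j,m}` is a nonzero polynomial of degree
`(j-n+1) n^{m-1}`, and for every nonzero `z_0` with `z_0^{n^m} = z_0`,
`(j n^{m-1} - n^m) ∑_{i=0}^{m-1} z_0^{n^i(j-n)} = z_0^{-n^{m-1}} P_{n,j,m}(z_0)`. -/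
theorem P_mid_degree_and_eval (n m j : ℕ) (hn : 2 ≤ n) (hm : 1 ≤ m)
    (hj1 : n + 1 ≤ j) (hj2 : j ≤ 2 * n - 2) :
    P n j m ≠ 0 ∧ (P n j m).natDegree = (j - n + 1) * n ^ (m - 1) ∧
    ∀ z0 : ℂ, z0 ≠ 0 → z0 ^ (n ^ m) = z0 →
      ((j : ℂ) * (n : ℂ) ^ (m - 1) - (n : ℂ) ^ m) *
          ∑ i ∈ Finset.range m, z0 ^ ((n : ℤ) ^ i * ((j : ℤ) - (n : ℤ))) =
        z0 ^ (-((n : ℤ) ^ (m - 1))) * (P n j m).eval z0 :=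
  P_mid_degree_and_eval_general n m j hm hj1 hj2
end

section
/- Let n ≥ 2, m ≥ 1 be integers and let j = 2n−1. Then the polynomial P_{n,j,m} is a nonzero polynomial whose degree equals 1 if m = 1 and equals 2·n^{m−1} − n^{m−2} if m ≥ 2, and for every z_0 ∈ ℂ with z_0 ≠ 0 and z_0^{n^m} = z_0 one has (j·n^{m−1} − n^m)·Σ_{i=0}^{m−1} z_0^{n^i(j−n)} = z_0^{−n^{m−1}}·P_{n,j,m}(z_0). -/
open Polynomial Finset

noncomputable def PTop (R : Type*) [Semiring R] (n m : ℕ) : R[X] :=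
  X + ∑ i ∈ range (m - 1), X ^ (n ^ i * (n - 1) + n ^ (m - 1))

lemma pow_mul_sub_one_add_pow {n : ℕ} (hn : 1 ≤ n) (k : ℕ) :
    n ^ k * (n - 1) + n ^ k = n ^ (k + 1) := by
  rw [Nat.mul_sub_one, ← pow_succ, Nat.sub_add_cancel (Nat.pow_le_pow_right hn k.le_succ)]

lemma P_two_mul_sub_one {n : ℕ} (hn : 1 ≤ n) (m : ℕ) :
    P n (2 * n - 1) m =
      C (((2 * n - 1 : ℕ) : ℂ) * (n : ℂ) ^ (m - 1) - (n : ℂ) ^ m) * PTop ℂ n m := by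
  rw [P, if_neg (by omega), if_neg (by omega), PTop]

lemma cast_two_mul_sub_one_mul_pow_sub_pow {n m : ℕ} (hn : 1 ≤ n) (hm : 1 ≤ m) :
    ((2 * n - 1 : ℕ) : ℂ) * (n : ℂ) ^ (m - 1) - (n : ℂ) ^ m =
      ((n : ℂ) - 1) * (n : ℂ) ^ (m - 1) := by
  obtain ⟨k, rfl⟩ : ∃ k, m = k + 1 := ⟨m - 1, by omega⟩
  rw [Nat.cast_sub (by omega)]
  push_cast
  ring

lemma natDegree_add_sum_X_pow {R : Type*} [Semiring R] [Nontrivial R] {p : R[X]}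
    {e : ℕ → ℕ} (he : StrictMono e) (hp : p.natDegree < e 0) (k : ℕ) :
    (p + ∑ i ∈ range (k + 1), X ^ e i).natDegree = e k := by
  induction k with
  | zero =>
    rw [sum_range_one, natDegree_add_eq_right_of_natDegree_lt, natDegree_X_pow]
    rwa [natDegree_X_pow]
  | succ k ih =>
    rw [sum_range_succ, ← add_assoc, natDegree_add_eq_right_of_natDegree_lt, natDegree_X_pow]
    rw [ih, natDegree_X_pow]
    exact he k.lt_succ_self

lemma natDegree_PTop {R : Type*} [Semiring R] [Nontrivial R] {n m : ℕ} (hn : 2 ≤ n)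
    (hm : 1 ≤ m) :
    (PTop R n m).natDegree = if m = 1 then 1 else 2 * n ^ (m - 1) - n ^ (m - 2) := by
  obtain ⟨k, rfl⟩ : ∃ k, m = k + 1 := ⟨m - 1, by omega⟩
  cases k with
  | zero => simp [PTop]
  | succ k =>
    have he : StrictMono fun i ↦ n ^ i * (n - 1) + n ^ (k + 1) := fun i j hij ↦
      Nat.add_lt_add_right (Nat.mul_lt_mul_of_pos_right (Nat.pow_lt_pow_right hn hij)
        (by omega)) _
    have hpow := pow_mul_sub_one_add_pow (by omega : 1 ≤ n) k
    rw [PTop, Nat.add_sub_cancel, natDegree_add_sum_X_pow he]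
    · simp only [if_neg k.succ_ne_zero, Nat.add_eq_right]
      rw [show k + 1 + 1 - 2 = k by omega]
      omega
    · rw [natDegree_X, pow_zero, one_mul]
      have := Nat.one_le_pow (k + 1) n (by omega)
      omega

lemma eval_PTop {R : Type*} [CommSemiring R] {n m : ℕ} (hn : 1 ≤ n) (hm : 1 ≤ m) {z : R}
    (hz : z ^ n ^ m = z) :
    (PTop R n m).eval z = (∑ i ∈ range m, z ^ (n ^ i * (n - 1))) * z ^ n ^ (m - 1) := by
  obtain ⟨k, rfl⟩ : ∃ k, m = k + 1 := ⟨m - 1, by omega⟩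
  have hlast : z ^ (n ^ k * (n - 1)) * z ^ n ^ k = z := by
    rw [← pow_add, pow_mul_sub_one_add_pow hn, hz]
  simp only [PTop, Nat.add_sub_cancel, eval_add, eval_X, eval_finsetSum, eval_pow,
    sum_range_succ, add_mul, hlast, sum_mul, ← pow_add]
  exact add_comm _ _

/-- Proposition 4.3, case `j = 2n-1`: `P_{n,2n-1,m}` is a nonzero polynomial whose degree
is `1` if `m = 1` and `2 n^{m-1} - n^{m-2}` if `m ≥ 2`, and for every nonzero `z_0` with
`z_0^{n^m} = z_0`,
`(j n^{m-1} - n^m) ∑_{i=0}^{m-1} z_0^{n^i(j-n)} = z_0^{-n^{m-1}} P_{n,j,m}(z_0)`. -/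
theorem P_top_degree_and_eval (n m : ℕ) (hn : 2 ≤ n) (hm : 1 ≤ m) :
    P n (2 * n - 1) m ≠ 0 ∧
    (P n (2 * n - 1) m).natDegree =
      (if m = 1 then 1 else 2 * n ^ (m - 1) - n ^ (m - 2)) ∧
    ∀ z0 : ℂ, z0 ≠ 0 → z0 ^ (n ^ m) = z0 →
      (((2 * n - 1 : ℕ) : ℂ) * (n : ℂ) ^ (m - 1) - (n : ℂ) ^ m) *
          ∑ i ∈ Finset.range m, z0 ^ ((n : ℤ) ^ i * (((2 * n - 1 : ℕ) : ℤ) - (n : ℤ))) =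
        z0 ^ (-((n : ℤ) ^ (m - 1))) * (P n (2 * n - 1) m).eval z0 := by
  have hc : ((2 * n - 1 : ℕ) : ℂ) * (n : ℂ) ^ (m - 1) - (n : ℂ) ^ m ≠ 0 := by
    rw [cast_two_mul_sub_one_mul_pow_sub_pow (by omega) hm]
    exact mul_ne_zero (sub_ne_zero.mpr (by exact_mod_cast (by omega : n ≠ 1)))
      (pow_ne_zero _ (by exact_mod_cast (by omega : n ≠ 0)))
  have hdeg : (P n (2 * n - 1) m).natDegree =
      (if m = 1 then 1 else 2 * n ^ (m - 1) - n ^ (m - 2)) := by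
    rw [P_two_mul_sub_one (by omega), natDegree_C_mul hc, natDegree_PTop hn hm]
  refine ⟨ne_zero_of_natDegree_gt (n := 0) ?_, hdeg, fun z hz0 hz ↦ ?_⟩
  · rw [hdeg]
    split_ifs
    · exact one_pos
    · have := Nat.pow_lt_pow_right hn (by omega : m - 2 < m - 1)
      omega
  · have hexp (i : ℕ) :
        (n : ℤ) ^ i * (((2 * n - 1 : ℕ) : ℤ) - n) = ((n ^ i * (n - 1) : ℕ) : ℤ) := by
      push_cast [Nat.cast_sub (by omega : 1 ≤ 2 * n), Nat.cast_sub (by omega : 1 ≤ n)]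
      ring
    simp only [hexp, zpow_natCast]
    rw [P_two_mul_sub_one (by omega), eval_mul, eval_C, eval_PTop (by omega) hm hz,
      ← Nat.cast_pow (α := ℤ), zpow_neg, zpow_natCast]
    field_simp
end

section
/- Let n ≥ 2 and m ≥ 2 be integers, and let j_1, j_2 be integers with 0 ≤ j_1 < j_2 ≤ 2n−2 and j_1, j_2 ∉ {n−1, n}. Then the polynomials P_{n,j_1,m} and P_{n,j_2,m} have no monomial terms of the same degree; that is, their supports are disjoint. -/
/-!
Write `q = n^(m-1)`. Apart from the extra monomial `z^((j+1)q - 1)` present for `j ≤ n - 2`, every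
exponent of `P n j m` is `q + n^i (j - n)`. For `j ≤ 2n - 2` with `j ∉ {n - 1, n}`, `|j - n|`
lies in `[2, 2n)` when `j < n` and in `[1, n)` when `j > n`; since `n^i a = n^k b` forces `a = b`
for `a, b ∈ [c, nc)`, such an exponent determines `j`. The extra exponents are pairwise distinct
and `≥ q - 1`, whereas `q + n^i (j - n) ≤ q - 2` for `j < n`; for `j > n` they differ modulo `n`,
as `n ∣ q` (here `m ≥ 2`) while `n ∤ n^i d + 1` for `0 ≤ d ≤ n - 2`.
-/

open Polynomial

theorem eq_of_pow_mul_eq_pow_mul {R : Type*} [Semiring R] [LinearOrder R] [IsStrictOrderedRing R]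
    {n a b c : R} {i k : ℕ} (hn : 1 ≤ n) (hc : 0 < c) (ha : c ≤ a) (ha' : a < n * c)
    (hb : c ≤ b) (hb' : b < n * c) (h : n ^ i * a = n ^ k * b) : a = b := by
  wlog hik : i ≤ k generalizing a b i k
  · exact (this hb hb' ha ha' h.symm (le_of_not_ge hik)).symm
  have hpow : 0 < n ^ i := pow_pos (zero_lt_one.trans_le hn) i
  rcases hik.lt_or_eq with hlt | rfl
  · refine absurd h (ne_of_lt ?_)
    calc n ^ i * a < n ^ i * (n * c) := mul_lt_mul_of_pos_left ha' hpow
      _ ≤ n ^ i * (n * b) := by gcongr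
      _ = n ^ (i + 1) * b := by rw [pow_succ, mul_assoc]
      _ ≤ n ^ k * b := by gcongr; exacts [hc.le.trans hb, hlt]
  · exact (mul_left_cancel_iff_of_pos hpow).mp h

theorem Int.not_dvd_pow_mul_add_one {n d : ℤ} (i : ℕ) (hd : 0 ≤ d) (hdn : d + 1 < n) :
    ¬ n ∣ n ^ i * d + 1 := by
  intro h
  rcases i with _ | i
  · rw [pow_zero, one_mul] at h
    have := Int.le_of_dvd (by omega) h
    omega
  · have h1 : n ∣ 1 := (dvd_add_right (dvd_mul_of_dvd_left (dvd_pow_self n i.succ_ne_zero))).mp h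
    have := Int.le_of_dvd one_pos h1
    omega

theorem Polynomial.exists_eq_of_mem_support_sum_X_pow {R ι : Type*} [Semiring R] {s : Finset ι}
    {e : ι → ℕ} {k : ℕ} (hk : k ∈ (∑ i ∈ s, X ^ e i : R[X]).support) : ∃ i ∈ s, k = e i := by
  rw [mem_support_iff, finsetSum_coeff] at hk
  obtain ⟨i, hi, h⟩ := Finset.exists_ne_zero_of_sum_ne_zero hk
  rw [coeff_X_pow] at h
  exact ⟨i, hi, of_not_not fun hne => h (if_neg hne)⟩

namespace P

def extraExp (n m j : ℕ) : ℤ := (j + 1) * n ^ (m - 1) - 1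

/-- Computed in `ℤ`, so that the case `j < n` involves no truncated subtraction. -/
def geomExp (n m j i : ℕ) : ℤ := n ^ (m - 1) + n ^ i * ((j : ℤ) - n)

variable {n m j : ℕ}

theorem extraExp_injective (hn : 0 < n) : Function.Injective (extraExp n m) := by
  intro j₁ j₂ h
  have hq : (0 : ℤ) < n ^ (m - 1) := by positivity
  unfold extraExp at h
  have := mul_right_cancel₀ hq.ne' (sub_left_injective h)
  omega

theorem mem_support (hn : 0 < n) (hj : j ≤ 2 * n - 2) (hj' : j ≠ n - 1) {k : ℕ}
    (hk : k ∈ (P n j m).support) : (k : ℤ) = extraExp n m j ∨ ∃ i, (k : ℤ) = geomExp n m j i := by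
  rw [P, C_mul'] at hk
  replace hk := support_smul _ _ hk
  split_ifs at hk with hlow
  · rcases Finset.mem_union.mp (support_add hk) with hk | hk
    · rw [support_X_pow, Finset.mem_singleton] at hk
      have : 1 ≤ (j + 1) * n ^ (m - 1) := Nat.one_le_iff_ne_zero.mpr (by positivity)
      left
      rw [hk, extraExp]
      push_cast [this]
      ring
    · obtain ⟨i, hi, rfl⟩ := exists_eq_of_mem_support_sum_X_pow hk
      have : n ^ i * (n - j) ≤ n ^ (m - 1) := calc
        n ^ i * (n - j) ≤ n ^ i * n := Nat.mul_le_mul_left _ (Nat.sub_le n j)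
        _ = n ^ (i + 1) := (pow_succ n i).symm
        _ ≤ n ^ (m - 1) := Nat.pow_le_pow_right hn (by have := Finset.mem_range.mp hi; omega)
      right
      refine ⟨i, ?_⟩
      rw [geomExp]
      push_cast [this, (by omega : j ≤ n)]
      ring
  · obtain ⟨i, -, rfl⟩ := exists_eq_of_mem_support_sum_X_pow hk
    right
    refine ⟨i, ?_⟩
    rw [geomExp]
    push_cast [(by omega : n ≤ j)]
    ring

theorem geomExp_inj (hn : 2 ≤ n) {j₁ j₂ i₁ i₂ : ℕ} (hj₁ : j₁ ≤ 2 * n - 2) (hj₁' : j₁ ≠ n - 1)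
    (hj₁'' : j₁ ≠ n) (hj₂ : j₂ ≤ 2 * n - 2) (hj₂' : j₂ ≠ n - 1) (hj₂'' : j₂ ≠ n)
    (h : geomExp n m j₁ i₁ = geomExp n m j₂ i₂) : j₁ = j₂ := by
  replace h := add_left_cancel h
  have hpow (i : ℕ) : (0 : ℤ) < n ^ i := by positivity
  have hn' : (1 : ℤ) ≤ n := by exact_mod_cast (by omega : 1 ≤ n)
  rcases (by omega : j₁ + 2 ≤ n ∨ n < j₁) with hl₁ | hh₁ <;>
    rcases (by omega : j₂ + 2 ≤ n ∨ n < j₂) with hl₂ | hh₂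
  · have := eq_of_pow_mul_eq_pow_mul (c := 2) (a := (n : ℤ) - j₁) (b := (n : ℤ) - j₂)
      (i := i₁) (k := i₂) hn' two_pos (by omega) (by omega) (by omega) (by omega)
      (by linear_combination -h)
    omega
  · nlinarith [hpow i₁, hpow i₂]
  · nlinarith [hpow i₁, hpow i₂]
  · have := eq_of_pow_mul_eq_pow_mul (c := 1) (a := (j₁ : ℤ) - n) (b := (j₂ : ℤ) - n)
      (i := i₁) (k := i₂) hn' one_pos (by omega) (by omega) (by omega) (by omega) h
    omega

theorem extraExp_ne_geomExp (hn : 2 ≤ n) (hm : 2 ≤ m) {j' : ℕ} (hj' : j' ≤ 2 * n - 2)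
    (hj'₁ : j' ≠ n - 1) (hj'₂ : j' ≠ n) (i : ℕ) : extraExp n m j ≠ geomExp n m j' i := by
  intro h
  unfold extraExp geomExp at h
  rcases (by omega : j' + 2 ≤ n ∨ n < j') with hlow | hhigh
  · have hq : (0 : ℤ) < n ^ (m - 1) := by positivity
    have hpow : (1 : ℤ) ≤ n ^ i := one_le_pow₀ (by exact_mod_cast (by omega : 1 ≤ n))
    have hd : (j' : ℤ) - n ≤ -2 := by omega
    nlinarith
  · have hdvd : (n : ℤ) ∣ n ^ (m - 1) := dvd_pow_self _ (by omega)
    refine Int.not_dvd_pow_mul_add_one (n := n) (d := (j' : ℤ) - n) i (by omega) (by omega) ?_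
    rw [← dvd_add_right hdvd, ← add_assoc, ← h, sub_add_cancel]
    exact dvd_mul_of_dvd_right hdvd _

end P

/-- Proposition 4.3, property (b): for `m ≥ 2` and `0 ≤ j₁ < j₂ ≤ 2n-2` with
`j₁, j₂ ∉ {n-1, n}`, the polynomials `P_{n,j₁,m}` and `P_{n,j₂,m}` have no monomial
terms of the same degree, i.e. their supports are disjoint. -/
theorem P_supports_disjoint_mid (n m j1 j2 : ℕ) (hn : 2 ≤ n) (hm : 2 ≤ m)
    (h12 : j1 < j2) (hj2 : j2 ≤ 2 * n - 2)
    (hj1n : j1 ≠ n - 1) (hj1n' : j1 ≠ n) (hj2n : j2 ≠ n - 1) (hj2n' : j2 ≠ n) :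
    Disjoint (P n j1 m).support (P n j2 m).support := by
  have hj1 : j1 ≤ 2 * n - 2 := by omega
  rw [Finset.disjoint_left]
  intro k hk1 hk2
  rcases P.mem_support (by omega) hj1 hj1n hk1 with h1 | ⟨i1, h1⟩ <;>
    rcases P.mem_support (by omega) hj2 hj2n hk2 with h2 | ⟨i2, h2⟩
  · exact h12.ne (P.extraExp_injective (by omega) (h1.symm.trans h2))
  · exact P.extraExp_ne_geomExp hn hm hj2 hj2n hj2n' i2 (h1.symm.trans h2)
  · exact P.extraExp_ne_geomExp hn hm hj1 hj1n hj1n' i1 (h2.symm.trans h1)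
  · exact h12.ne (P.geomExp_inj hn hj1 hj1n hj1n' hj2 hj2n hj2n' (h1.symm.trans h2))
end

section
/- Let n ≥ 2 and m ≥ 3 be integers, and let j_1, j_2 be integers with 0 ≤ j_1 < j_2 ≤ 2n−1 and j_1, j_2 ∉ {n−1, n}. Then the polynomials P_{n,j_1,m} and P_{n,j_2,m} have no monomial terms of the same degree; that is, their supports are disjoint. -/
/-!
Write `N = n^(m-1)`. Apart from one extra exponent, the exponents of `P_{n,j,m}` are
`N + n^i (j - n)`: below `N` for `j < n` and above `N` for `j > n`. Within one side, a
coincidence `n^i a = n^k b` with "digits" `a = |j₁ - n|`, `b = |j₂ - n|` satisfying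
`a < n b` and `b < n a` forces `a = b`. The extra exponents `(j+1)N - 1` and `1` are kept
apart from the others by size and by their residue mod `n`; the one near-collision,
`2N - 1 = N + (n - 1)` for `j₁ = 1`, `j₂ = 2n - 1`, needs `N > n`, i.e. `m ≥ 3`.
-/

open Polynomial Finset

theorem Polynomial.support_C_mul_subset {R : Type*} [Semiring R] (c : R) (p : R[X]) :
    (C c * p).support ⊆ p.support := by
  rw [C_mul']
  exact support_smul c p

theorem Polynomial.support_sum_X_pow_subset {R ι : Type*} [Semiring R] (s : Finset ι)
    (e : ι → ℕ) : (∑ i ∈ s, (X : R[X]) ^ e i).support ⊆ s.image e := by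
  intro k hk
  rw [mem_support_iff, finsetSum_coeff] at hk
  obtain ⟨i, hi, hne⟩ := exists_ne_zero_of_sum_ne_zero hk
  rw [coeff_X_pow] at hne
  exact mem_image.mpr ⟨i, hi, by_contra fun h => hne (if_neg (Ne.symm h))⟩

namespace Nat

theorem eq_of_pow_mul_eq_pow_mul_of_le {n i k a b : ℕ} (hn : 0 < n) (hik : i ≤ k)
    (h : n ^ i * a = n ^ k * b) (ha : a < n * b) : a = b := by
  obtain ⟨t, rfl⟩ := exists_add_of_le hik
  rw [pow_add, mul_assoc] at h
  have hab : a = n ^ t * b := Nat.eq_of_mul_eq_mul_left (pow_pos hn i) h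
  rcases t with _ | t
  · simpa using hab
  · have : n * b ≤ n ^ (t + 1) * b := mul_le_mul_right b (le_self_pow (by omega) n)
    omega

theorem eq_of_pow_mul_eq_pow_mul {n i k a b : ℕ} (hn : 0 < n) (h : n ^ i * a = n ^ k * b)
    (ha : a < n * b) (hb : b < n * a) : a = b := by
  rcases le_total i k with hik | hki
  · exact eq_of_pow_mul_eq_pow_mul_of_le hn hik h ha
  · exact (eq_of_pow_mul_eq_pow_mul_of_le hn hki h.symm hb).symm

theorem pow_mul_add_one_ne_mul_pow {n i k a b : ℕ} (hn : 2 ≤ n) (hi : i ≠ 0) (hk : k ≠ 0) :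
    n ^ i * a + 1 ≠ b * n ^ k := by
  intro h
  have hdvd : n ∣ n ^ i * a + 1 := h ▸ (dvd_pow_self n hk).mul_left b
  have := eq_one_of_dvd_one ((Nat.dvd_add_right ((dvd_pow_self n hi).mul_right a)).mp hdvd)
  omega

end Nat

def lowerExponents (n j m : ℕ) : Finset ℕ :=
  (range (m - 1)).image fun i => n ^ (m - 1) - n ^ i * (n - j)

def upperExponents (n d m : ℕ) : Finset ℕ :=
  (range m).image fun i => n ^ i * d + n ^ (m - 1)

section Exponents

variable {n m j e : ℕ}

theorem add_two_le_pow_pred (hn : 2 ≤ n) (hm : 3 ≤ m) : n + 2 ≤ n ^ (m - 1) :=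
  calc n + 2 ≤ n ^ 2 := by nlinarith
    _ ≤ n ^ (m - 1) := Nat.pow_le_pow_right (by omega) (by omega)

theorem exists_add_eq_of_mem_lowerExponents (hn : 0 < n) (he : e ∈ lowerExponents n j m) :
    ∃ i < m - 1, e + n ^ i * (n - j) = n ^ (m - 1) := by
  obtain ⟨i, hi, rfl⟩ := mem_image.mp he
  have hi : i < m - 1 := mem_range.mp hi
  have : n ^ i * (n - j) ≤ n ^ (m - 1) :=
    calc n ^ i * (n - j) ≤ n ^ i * n := Nat.mul_le_mul_left _ (Nat.sub_le n j)
      _ = n ^ (i + 1) := (pow_succ n i).symm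
      _ ≤ n ^ (m - 1) := Nat.pow_le_pow_right hn hi
  exact ⟨i, hi, Nat.sub_add_cancel this⟩

theorem add_two_le_of_mem_lowerExponents (hj : j + 2 ≤ n) (he : e ∈ lowerExponents n j m) :
    e + 2 ≤ n ^ (m - 1) := by
  obtain ⟨i, -, hi⟩ := exists_add_eq_of_mem_lowerExponents (by omega) he
  have : n - j ≤ n ^ i * (n - j) := Nat.le_mul_of_pos_left _ (pow_pos (by omega) i)
  omega

theorem disjoint_lowerExponents {j₁ j₂ : ℕ} (hj₁ : j₁ + 2 ≤ n) (hj₂ : j₂ + 2 ≤ n)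
    (hne : j₁ ≠ j₂) : Disjoint (lowerExponents n j₁ m) (lowerExponents n j₂ m) := by
  refine disjoint_left.mpr fun e he₁ he₂ => hne ?_
  obtain ⟨i, -, hi⟩ := exists_add_eq_of_mem_lowerExponents (by omega) he₁
  obtain ⟨k, -, hk⟩ := exists_add_eq_of_mem_lowerExponents (by omega) he₂
  have h₁ : n * 2 ≤ n * (n - j₁) := Nat.mul_le_mul_left n (by omega)
  have h₂ : n * 2 ≤ n * (n - j₂) := Nat.mul_le_mul_left n (by omega)
  have := Nat.eq_of_pow_mul_eq_pow_mul (n := n) (i := i) (k := k) (a := n - j₁) (b := n - j₂)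
    (by omega) (by omega) (by omega) (by omega)
  omega

theorem disjoint_upperExponents {d₁ d₂ : ℕ} (hd₁ : 0 < d₁) (hd₁' : d₁ < n) (hd₂ : 0 < d₂)
    (hd₂' : d₂ < n) (hne : d₁ ≠ d₂) :
    Disjoint (upperExponents n d₁ m) (upperExponents n d₂ m) := by
  refine disjoint_left.mpr fun e he₁ he₂ => hne ?_
  obtain ⟨i, -, rfl⟩ := mem_image.mp he₁
  obtain ⟨k, -, hk⟩ := mem_image.mp he₂
  have h₁ : n ≤ n * d₁ := Nat.le_mul_of_pos_right n hd₁
  have h₂ : n ≤ n * d₂ := Nat.le_mul_of_pos_right n hd₂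
  exact Nat.eq_of_pow_mul_eq_pow_mul (n := n) (i := i) (k := k) (by omega) (by omega) (by omega)
    (by omega)

theorem disjoint_lowerExponents_upperExponents {d : ℕ} (hj : j + 2 ≤ n) :
    Disjoint (lowerExponents n j m) (upperExponents n d m) := by
  refine disjoint_left.mpr fun e he₁ he₂ => ?_
  have := add_two_le_of_mem_lowerExponents hj he₁
  obtain ⟨i, -, rfl⟩ := mem_image.mp he₂
  omega

theorem one_notMem_upperExponents {d : ℕ} (hn : 0 < n) (hd : 0 < d) :
    1 ∉ upperExponents n d m := by
  intro he
  obtain ⟨i, -, hi⟩ := mem_image.mp he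
  have : 0 < n ^ i * d := Nat.mul_pos (pow_pos hn i) hd
  have : 0 < n ^ (m - 1) := pow_pos hn _
  omega

theorem head_notMem_lowerExponents {j' : ℕ} (hj : j + 2 ≤ n) :
    (j' + 1) * n ^ (m - 1) - 1 ∉ lowerExponents n j m := fun he => by
  have := add_two_le_of_mem_lowerExponents hj he
  have : n ^ (m - 1) ≤ (j' + 1) * n ^ (m - 1) := Nat.le_mul_of_pos_left _ j'.succ_pos
  omega

theorem one_notMem_lowerExponents (hn : 2 ≤ n) (hm : 3 ≤ m) (hj : j < n) :
    1 ∉ lowerExponents n j m := fun he => by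
  have hN := add_two_le_pow_pred hn hm
  obtain ⟨i, -, hi⟩ := exists_add_eq_of_mem_lowerExponents (by omega) he
  rcases eq_or_ne i 0 with rfl | hi0
  · rw [pow_zero, one_mul] at hi
    omega
  · exact Nat.pow_mul_add_one_ne_mul_pow (k := m - 1) (a := n - j) (b := 1) hn hi0
      (by omega) (by omega)

theorem head_notMem_upperExponents {d : ℕ} (hn : 2 ≤ n) (hm : 3 ≤ m) (hd : d < n) :
    (j + 1) * n ^ (m - 1) - 1 ∉ upperExponents n d m := fun he => by
  have hN := add_two_le_pow_pred hn hm
  obtain ⟨i, -, hi⟩ := mem_image.mp he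
  rcases eq_or_ne i 0 with rfl | hi0
  · -- `j n^(m-1) = d + 1` lies strictly between `0` and `n^(m-1)`
    rw [pow_zero, one_mul] at hi
    rcases j with _ | j
    · omega
    · have : 2 * n ^ (m - 1) ≤ (j + 1 + 1) * n ^ (m - 1) := Nat.mul_le_mul_right _ (by omega)
      omega
  · refine Nat.pow_mul_add_one_ne_mul_pow (k := m - 1) (a := d) (b := j) hn hi0 (by omega) ?_
    rw [add_one_mul] at hi
    omega

end Exponents

section Support

variable {n j m : ℕ}

theorem support_P_subset_lower (hj : j ≤ n - 2) :
    (P n j m).support ⊆ insert ((j + 1) * n ^ (m - 1) - 1) (lowerExponents n j m) := by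
  rw [P, if_pos hj]
  refine (support_C_mul_subset _ _).trans <| support_add.trans <| union_subset ?_ ?_
  · rw [support_X_pow, singleton_subset_iff]
    exact mem_insert_self _ _
  · exact (support_sum_X_pow_subset _ _).trans (subset_insert _ _)

theorem support_P_subset_upper (hj : n - 2 < j) (hj' : j ≤ 2 * n - 2) :
    (P n j m).support ⊆ upperExponents n (j - n) m := by
  rw [P, if_neg hj.not_ge, if_pos hj']
  exact (support_C_mul_subset _ _).trans (support_sum_X_pow_subset _ _)

theorem support_P_subset_insert_one_upper (hj : n - 2 < j) (hj' : j ≤ 2 * n - 1) :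
    (P n j m).support ⊆ insert 1 (upperExponents n (j - n) m) := by
  rcases le_or_gt j (2 * n - 2) with hmid | htop
  · exact (support_P_subset_upper hj hmid).trans (subset_insert _ _)
  rw [P, if_neg hj.not_ge, if_neg htop.not_ge, show j - n = n - 1 by omega]
  refine (support_C_mul_subset _ _).trans <| support_add.trans <| union_subset ?_ ?_
  · rw [support_X, singleton_subset_iff]
    exact mem_insert_self _ _
  · exact (support_sum_X_pow_subset _ _).trans <|
      (image_subset_image (range_subset_range.mpr (m.sub_le 1))).trans (subset_insert _ _)

end Support

section Disjoint

variable {n m j₁ j₂ : ℕ}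

theorem disjoint_support_P_of_le_of_le (hn : 2 ≤ n) (hj₁ : j₁ ≤ n - 2) (hj₂ : j₂ ≤ n - 2)
    (hne : j₁ ≠ j₂) : Disjoint (P n j₁ m).support (P n j₂ m).support := by
  refine .mono (support_P_subset_lower hj₁) (support_P_subset_lower hj₂) ?_
  simp only [disjoint_insert_left, disjoint_insert_right, mem_insert, not_or]
  refine ⟨⟨fun h => hne ?_, head_notMem_lowerExponents (by omega)⟩,
    head_notMem_lowerExponents (by omega), disjoint_lowerExponents (by omega) (by omega) hne⟩
  have hN : 0 < n ^ (m - 1) := pow_pos (by omega) _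
  exact Nat.succ_injective <|
    Nat.eq_of_mul_eq_mul_right hN (Nat.sub_one_cancel (by positivity) (by positivity) h.symm)

theorem disjoint_support_P_of_le_of_lt (hn : 2 ≤ n) (hm : 3 ≤ m) (hj₁ : j₁ ≤ n - 2)
    (hj₂ : n < j₂) (hj₂' : j₂ ≤ 2 * n - 1) :
    Disjoint (P n j₁ m).support (P n j₂ m).support := by
  refine .mono (support_P_subset_lower hj₁) (support_P_subset_insert_one_upper (by omega) hj₂') ?_
  simp only [disjoint_insert_left, disjoint_insert_right, mem_insert, not_or]
  refine ⟨⟨fun h => ?_, one_notMem_lowerExponents hn hm (by omega)⟩,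
    head_notMem_upperExponents hn hm (by omega), disjoint_lowerExponents_upperExponents (by omega)⟩
  have := add_two_le_pow_pred hn hm
  have : n ^ (m - 1) ≤ (j₁ + 1) * n ^ (m - 1) := Nat.le_mul_of_pos_left _ j₁.succ_pos
  omega

theorem disjoint_support_P_of_lt_of_lt (hj₁ : n < j₁) (h₁₂ : j₁ < j₂) (hj₂ : j₂ ≤ 2 * n - 1) :
    Disjoint (P n j₁ m).support (P n j₂ m).support := by
  refine .mono (support_P_subset_upper (by omega) (by omega))
    (support_P_subset_insert_one_upper (by omega) hj₂) ?_
  rw [disjoint_insert_right]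
  exact ⟨one_notMem_upperExponents (by omega) (by omega),
    disjoint_upperExponents (by omega) (by omega) (by omega) (by omega) (by omega)⟩

end Disjoint

/-- Proposition 4.3, property (c): for `m ≥ 3` and `0 ≤ j₁ < j₂ ≤ 2n-1` with
`j₁, j₂ ∉ {n-1, n}`, the polynomials `P_{n,j₁,m}` and `P_{n,j₂,m}` have no monomial
terms of the same degree, i.e. their supports are disjoint. -/
theorem P_supports_disjoint_top (n m j1 j2 : ℕ) (hn : 2 ≤ n) (hm : 3 ≤ m)
    (h12 : j1 < j2) (hj2 : j2 ≤ 2 * n - 1)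
    (hj1n : j1 ≠ n - 1) (hj1n' : j1 ≠ n) (hj2n : j2 ≠ n - 1) (hj2n' : j2 ≠ n) :
    Disjoint (P n j1 m).support (P n j2 m).support := by
  rcases le_or_gt j1 (n - 2) with hlow1 | hhigh1
  · rcases le_or_gt j2 (n - 2) with hlow2 | hhigh2
    · exact disjoint_support_P_of_le_of_le hn hlow1 hlow2 h12.ne
    · exact disjoint_support_P_of_le_of_lt hn hm hlow1 (by omega) hj2
  · exact disjoint_support_P_of_lt_of_lt (by omega) h12 hj2
end

section
/- Let n ≥ 2 and m ≥ 2 be integers, let i be a nonnegative integer, and let j_1, j_2 be integers with 0 ≤ j_1, j_2 ≤ 2n−1 and j_1, j_2 ∉ {n−1, n}. If (j_1+1)·n^{m−1} − 1 = n^i·(j_2 − n) + n^{m−1} (as integers), then i = 0, j_2 = 2n−1, and j_1·n^{m−1} = n. In particular, if m ≥ 3 then no such identity can hold. -/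
theorem eq_zero_of_mul_pow_eq_pow_mul_add_one {R : Type*} [CommRing R] {n a b : R} {k i : ℕ}
    (hn : ¬IsUnit n) (hk : k ≠ 0) (h : a * n ^ k = n ^ i * b + 1) : i = 0 := by
  by_contra hi
  have hdvd : n ∣ n ^ i * b + 1 := h ▸ (dvd_pow_self n hk).mul_left a
  exact hn (isUnit_of_dvd_one ((dvd_add_right ((dvd_pow_self n hi).mul_right b)).mp hdvd))

theorem exponents_compare_general (n m i j1 j2 : ℕ) (hn : 2 ≤ n) (hm : 2 ≤ m)
    (hj2 : j2 ≤ 2 * n - 1) (hj2n : j2 ≠ n - 1)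
    (h : ((j1 : ℤ) + 1) * (n : ℤ) ^ (m - 1) - 1 =
      (n : ℤ) ^ i * ((j2 : ℤ) - (n : ℤ)) + (n : ℤ) ^ (m - 1)) :
    (i = 0 ∧ j2 = 2 * n - 1 ∧ (j1 : ℤ) * (n : ℤ) ^ (m - 1) = (n : ℤ)) ∧
      (3 ≤ m → False) := by
  have h' : (j1 : ℤ) * (n : ℤ) ^ (m - 1) = (n : ℤ) ^ i * ((j2 : ℤ) - n) + 1 := by linarith
  have hnu : ¬IsUnit (n : ℤ) := by rw [Int.isUnit_iff]; omega
  obtain rfl : i = 0 := eq_zero_of_mul_pow_eq_pow_mul_add_one hnu (by omega) h'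
  rw [pow_zero, one_mul] at h'
  have hj1 : j1 ≠ 0 := by
    rintro rfl
    exact hj2n (by omega)
  have hpow : ∀ k, k ≤ m - 1 → (n : ℤ) ^ k ≤ (n : ℤ) ^ (m - 1) := fun k hk =>
    pow_le_pow_right₀ (by omega) hk
  have hlow : (n : ℤ) ^ (m - 1) ≤ (j1 : ℤ) * (n : ℤ) ^ (m - 1) :=
    le_mul_of_one_le_left (by positivity) (by omega)
  -- `j2 - n + 1 ≤ n ≤ n ^ (m - 1) ≤ j1 * n ^ (m - 1)` leaves no room.
  have key : (j1 : ℤ) * (n : ℤ) ^ (m - 1) = n := by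
    have := hpow 1 (by omega)
    rw [pow_one] at this
    omega
  refine ⟨⟨rfl, by omega, key⟩, fun hm3 => ?_⟩
  have := hpow 2 (by omega)
  nlinarith

/-- The arithmetic fact behind the comparison of the leading exponent
`(j₁+1) n^{m-1} - 1` of `P_{n,j₁,m}` (for `0 ≤ j₁ ≤ n-2`) with the exponents
`n^i (j₂ - n) + n^{m-1}`: if `m ≥ 2` and `(j₁+1) n^{m-1} - 1 = n^i (j₂-n) + n^{m-1}`
(in ℤ), then `i = 0`, `j₂ = 2n-1` and `j₁ n^{m-1} = n`; in particular no such identity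
can hold when `m ≥ 3`. -/
theorem exponents_compare (n m i j1 j2 : ℕ) (hn : 2 ≤ n) (hm : 2 ≤ m)
    (hj1 : j1 ≤ 2 * n - 1) (hj1n : j1 ≠ n - 1) (hj1n' : j1 ≠ n)
    (hj2 : j2 ≤ 2 * n - 1) (hj2n : j2 ≠ n - 1) (hj2n' : j2 ≠ n)
    (h : ((j1 : ℤ) + 1) * (n : ℤ) ^ (m - 1) - 1 =
      (n : ℤ) ^ i * ((j2 : ℤ) - (n : ℤ)) + (n : ℤ) ^ (m - 1)) :
    (i = 0 ∧ j2 = 2 * n - 1 ∧ (j1 : ℤ) * (n : ℤ) ^ (m - 1) = (n : ℤ)) ∧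
      (3 ≤ m → False) :=
  exponents_compare_general n m i j1 j2 hn hm hj2 hj2n h
end

section
/- Let n ≥ 2 and m ≥ 1 be integers. Then there exists a point z_0 ∈ ℂ with z_0 ≠ 0 that is a periodic point of minimal period m of the map f_0(w) = w^n and satisfies P_{n,0,m}(z_0) ≠ 0, where P_{n,0,m}(z) = −n^m·(z^{n^{m−1}−1} + Σ_{i=0}^{m−2} z^{n^{m−1}−n^{i+1}}). -/
/-- The set of periodic points `z ∈ ℂ` of minimal period `m` of the map `f₀(w) = wⁿ`:
`f₀^∘m(z) = z` and `f₀^∘r(z) ≠ z` for all `1 ≤ r < m`. -/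
def perSet (n m : ℕ) : Set ℂ :=
  {z : ℂ | (fun w : ℂ => w ^ n)^[m] z = z ∧
    ∀ r, 1 ≤ r → r < m → (fun w : ℂ => w ^ n)^[r] z ≠ z}

/-!
Take `ζ = exp(2πi/(nᵐ - 1))`. Its `k`-th iterate under `w ↦ wⁿ` is `ζ^(nᵏ)`, which equals `ζ`
for `k = m`, but not for `0 < r < m` because then `1 < nʳ < nᵐ - 1`. Every exponent `e`
occurring in `P_{n,0,m}` satisfies `2e < nᵐ - 1`, so all the terms `ζᵉ` lie in the closed upper
half plane, and for `m ≥ 2` the term `ζ^(n^(m-1) - 1)` lies strictly inside it; hence the sum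
has positive imaginary part. For `m = 1` the polynomial is the constant `-n`.
-/

open Complex Polynomial Real

namespace IsPrimitiveRoot

variable {M : Type*} [CommMonoid M] {ζ : M} {n m : ℕ}

lemma pow_pow_eq_self (hζ : IsPrimitiveRoot ζ (n ^ m - 1)) (hn : n ≠ 0) : ζ ^ n ^ m = ζ := by
  rw [← Nat.sub_add_cancel (Nat.one_le_pow m n (Nat.pos_of_ne_zero hn)), pow_succ,
    hζ.pow_eq_one, one_mul]

lemma pow_pow_ne_self (hζ : IsPrimitiveRoot ζ (n ^ m - 1)) (hn : 1 < n) {r : ℕ} (hr : 0 < r)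
    (hrm : r < m) : ζ ^ n ^ r ≠ ζ := by
  have hnr : n ≤ n ^ r := Nat.le_self_pow hr.ne' n
  have h2r : 2 * n ^ r ≤ n ^ m := calc
    2 * n ^ r ≤ n * n ^ r := Nat.mul_le_mul_right _ hn
    _ = n ^ (r + 1) := (pow_succ' n r).symm
    _ ≤ n ^ m := Nat.pow_le_pow_right (by omega) hrm
  intro h
  have := hζ.pow_inj (by omega) (by omega) (h.trans (pow_one ζ).symm)
  omega

end IsPrimitiveRoot

lemma IsPrimitiveRoot.mem_perSet {ζ : ℂ} {n m : ℕ} (hζ : IsPrimitiveRoot ζ (n ^ m - 1))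
    (hn : 1 < n) : ζ ∈ perSet n m :=
  ⟨by rw [pow_iterate]; exact hζ.pow_pow_eq_self (by omega), fun r hr hrm => by
    rw [pow_iterate]; exact hζ.pow_pow_ne_self hn hr hrm⟩

lemma im_exp_two_pi_I_div_pow (M e : ℕ) :
    (cexp (2 * π * I / M) ^ e).im = Real.sin (2 * π * e / M) := by
  rw [← Complex.exp_nat_mul, ← exp_ofReal_mul_I_im]
  congr 2
  push_cast
  ring

lemma im_exp_two_pi_I_div_pow_nonneg {M e : ℕ} (he : 2 * e ≤ M) :
    0 ≤ (cexp (2 * π * I / M) ^ e).im := by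
  rw [im_exp_two_pi_I_div_pow]
  rcases (Nat.zero_le M).eq_or_lt with rfl | hM
  · simp
  refine sin_nonneg_of_nonneg_of_le_pi (by positivity) ?_
  rw [div_le_iff₀ (by exact_mod_cast hM)]
  have : 2 * (e : ℝ) ≤ M := by exact_mod_cast he
  nlinarith [pi_pos]

lemma im_exp_two_pi_I_div_pow_pos {M e : ℕ} (he : 0 < e) (heM : 2 * e < M) :
    0 < (cexp (2 * π * I / M) ^ e).im := by
  have he' : (0 : ℝ) < e := by exact_mod_cast he
  have heM' : 2 * (e : ℝ) < M := by exact_mod_cast heM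
  rw [im_exp_two_pi_I_div_pow]
  refine sin_pos_of_pos_of_lt_pi (div_pos (by positivity) (by linarith)) ?_
  rw [div_lt_iff₀ (by linarith)]
  nlinarith [pi_pos]

/-- Proposition 6.3 (base of the induction): there exists a nonzero periodic point `z₀`
of minimal period `m` of `f₀(w) = wⁿ` with `P_{n,0,m}(z₀) ≠ 0`, where
`P_{n,0,m}(z) = -n^m (z^{n^{m-1}-1} + ∑_{i=0}^{m-2} z^{n^{m-1}-n^{i+1}})`. -/
theorem exists_nonvanishing_perPoint (n m : ℕ) (hn : 2 ≤ n) (hm : 1 ≤ m) :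
    ∃ z0 : ℂ, z0 ≠ 0 ∧ z0 ∈ perSet n m ∧
      Polynomial.eval z0
        (Polynomial.C (-(n : ℂ) ^ m) *
          (Polynomial.X ^ (n ^ (m - 1) - 1) +
            ∑ i ∈ Finset.range (m - 1), Polynomial.X ^ (n ^ (m - 1) - n ^ (i + 1)))) ≠ 0 := by
  have hnm : n ≤ n ^ m := Nat.le_self_pow (by omega) n
  have hζ := isPrimitiveRoot_exp (n ^ m - 1) (by omega)
  refine ⟨_, Complex.exp_ne_zero _, hζ.mem_perSet hn, ?_⟩
  simp only [eval_mul, eval_C, eval_add, eval_pow, eval_X, eval_finsetSum]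
  refine mul_ne_zero (neg_ne_zero.mpr (pow_ne_zero _ (Nat.cast_ne_zero.mpr (by omega)))) ?_
  rcases hm.eq_or_lt with rfl | hm
  · simp
  have h2N : 2 * n ^ (m - 1) ≤ n ^ m := by
    rw [← Nat.sub_add_cancel hm.le, pow_succ', Nat.add_sub_cancel]
    exact Nat.mul_le_mul_right _ hn
  have hN : n ≤ n ^ (m - 1) := Nat.le_self_pow (by omega) n
  refine ne_of_apply_ne im (ne_of_gt ?_)
  rw [add_im, im_sum, zero_im]
  refine add_pos_of_pos_of_nonneg (im_exp_two_pi_I_div_pow_pos (by omega) (by omega))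
    (Finset.sum_nonneg fun i _ => im_exp_two_pi_I_div_pow_nonneg ?_)
  have := Nat.one_le_pow (i + 1) n (by omega)
  omega
end

section
/- Let n ≥ 3 be an integer and J_n = {0,…,n−2} ∪ {n+1,…,2n−1}. Let (m_k)_{k∈J_n} be positive integers with m_{2n−1} ≥ 3. Suppose there exist nonzero complex numbers z_k (for k ∈ J_n with k ≤ 2n−2), each a periodic point of minimal period m_k of the map f_0(w) = w^n, such that the square matrix with rows and columns indexed by J_n ∖ {2n−1} and with (k,i)-entry z_k^{−n^{m_k−1}}·P_{n,i,m_k}(z_k) is invertible. Then there exists a nonzero complex number z_{2n−1}, a periodic point of minimal period m_{2n−1} of f_0, such that the full (2n−2)×(2n−2) matrix with rows and columns indexed by J_n and with (k,i)-entry z_k^{−n^{m_k−1}}·P_{n,i,m_k}(z_k) is invertible. -/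
/-- The index set `J_n = {0,…,n-2} ∪ {n+1,…,2n-1}`. -/
def Jset (n : ℕ) : Finset ℕ :=
  (Finset.range (2 * n)).filter (fun k => k ≠ n - 1 ∧ k ≠ n)

/-!
Expanding the determinant along the row `2n - 1` writes it as `w ^ (-n ^ (M - 1)) * Q(w)`, where
`M = m (2n - 1)` and `Q = ∑ᵢ cᵢ • P_{n,i,M}` with `cᵢ` the cofactors of that row; the cofactor
`c_{2n-1}` is the given nonzero minor. For `M ≥ 3` only `P_{n,2n-1,M}` has a linear term, so
`Q ≠ 0`, and `deg Q ≤ (n - 1) n^(M-1)`. Among the `n^M - 1` roots of unity of order `n^M - 1`,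
those of smaller period are `(n^d - 1)`-th roots of unity with `d ≤ M / 2 ≤ M - 2`, fewer than
`n^(M-1) - 1` in all. So more than `deg Q` of them have minimal period `M`, and one of them is not
a root of `Q`.
-/

open Polynomial Finset

def Finset.subtypeNeEquivErase {α : Type*} [DecidableEq α] {s : Finset α} {a : α} (ha : a ∈ s) :
    {i : s // i ≠ ⟨a, ha⟩} ≃ s.erase a :=
  (Equiv.subtypeEquivRight fun i => by simp [Subtype.ext_iff, i.2]).trans
    (Equiv.subtypeSubtypeEquivSubtype Finset.mem_of_mem_erase)

namespace Matrix

theorem of_update_eq_updateRow {α β R : Type*} [DecidableEq α]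
    (F : α → β → α → R) (z : α → β) {s : Finset α} {a : α} (ha : a ∈ s) (w : β) :
    (of fun k i : s => F k (Function.update z a w k) i) =
      (of fun k i : s => F k (z k) i).updateRow ⟨a, ha⟩ fun i => F a w i := by
  ext k i
  by_cases hk : k = ⟨a, ha⟩
  · subst hk
    simp
  · have : (k : α) ≠ a := fun h => hk (Subtype.ext h)
    simp [updateRow_ne hk, Function.update_of_ne this]

variable {ι R : Type*} [Fintype ι] [DecidableEq ι] [CommRing R]

theorem det_updateRow_eq_sum_mul_adjugate (A : Matrix ι ι R) (k : ι) (r : ι → R) :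
    (A.updateRow k r).det = ∑ i, r i * A.adjugate i k := by
  rw [← cramer_transpose_apply, cramer_eq_adjugate_mulVec, ← adjugate_transpose, mulVec,
    dotProduct]
  simp only [transpose_apply, mul_comm]

theorem adjugate_apply_self (A : Matrix ι ι R) (k : ι) :
    A.adjugate k k = (A.submatrix (Subtype.val : {i // i ≠ k} → ι) Subtype.val).det := by
  rw [adjugate_apply, twoBlockTriangular_det _ (· ≠ k)]
  · have hminor : toSquareBlockProp (A.updateRow k (Pi.single k 1)) (· ≠ k) =
        A.submatrix Subtype.val Subtype.val := by
      ext i j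
      simp [toSquareBlockProp, toBlock_apply, updateRow_ne i.2]
    have hpivot : toSquareBlockProp (A.updateRow k (Pi.single k 1)) (fun i => ¬ i ≠ k) = 1 := by
      ext ⟨i, hi⟩ ⟨j, hj⟩
      simp only [not_not] at hi hj
      subst hi hj
      simp [toSquareBlockProp]
    rw [hminor, hpivot, det_one, mul_one]
  · intro i hi j hj
    rw [not_not.mp hi, updateRow_self, Pi.single_eq_of_ne hj]


theorem adjugate_apply_self_eq_det_erase {α : Type*} [DecidableEq α]
    (F : α → α → R) {s : Finset α} {a : α} (ha : a ∈ s) :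
    (of fun k i : s => F k i).adjugate ⟨a, ha⟩ ⟨a, ha⟩ = (of fun k i : s.erase a => F k i).det := by
  rw [adjugate_apply_self, ← det_submatrix_equiv_self (Finset.subtypeNeEquivErase ha)]
  rfl

theorem det_updateRow_mul_eval (A : Matrix ι ι R) (k : ι) (p : ι → R[X]) (c w : R) :
    (A.updateRow k fun i => c * (p i).eval w).det = c * (∑ i, A.adjugate i k • p i).eval w := by
  simp only [det_updateRow_eq_sum_mul_adjugate, eval_finsetSum, eval_smul, smul_eq_mul, mul_sum]
  exact sum_congr rfl fun i _ => by ring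

end Matrix

namespace Polynomial

variable {R ι : Type*} [Semiring R]

theorem coeff_sum_X_pow_of_forall_ne {s : Finset ι} {e : ι → ℕ} {k : ℕ}
    (he : ∀ j ∈ s, e j ≠ k) : (∑ j ∈ s, (X : R[X]) ^ e j).coeff k = 0 := by
  rw [finsetSum_coeff]
  exact sum_eq_zero fun j hj => by rw [coeff_X_pow, if_neg (he j hj).symm]

theorem natDegree_sum_X_pow_le {s : Finset ι} {e : ι → ℕ} {d : ℕ} (he : ∀ j ∈ s, e j ≤ d) :
    (∑ j ∈ s, (X : R[X]) ^ e j).natDegree ≤ d :=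
  natDegree_sum_le_of_forall_le _ _ fun j hj => natDegree_X_pow_le _ |>.trans (he j hj)

end Polynomial

theorem Nat.two_mul_le_of_dvd_of_lt {d M : ℕ} (hdvd : d ∣ M) (hlt : d < M) : 2 * d ≤ M := by
  obtain ⟨c, rfl⟩ := hdvd
  have : 2 ≤ c := by
    by_contra! h
    interval_cases c <;> omega
  nlinarith

theorem Complex.card_nthRootsFinset_one (k : ℕ) : #(nthRootsFinset k (1 : ℂ)) = k := by
  rcases eq_or_ne k 0 with rfl | hk
  · simp [nthRootsFinset_zero]
  · exact (Complex.isPrimitiveRoot_exp k hk).card_nthRootsFinset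

theorem mem_perSet_of_pow_eq_one {n M : ℕ} (hn : 2 ≤ n) {w : ℂ} (hw : w ^ (n ^ M - 1) = 1)
    (hdiv : ∀ d, 0 < d → d ∣ M → d < M → w ^ (n ^ d - 1) ≠ 1) : w ∈ perSet n M := by
  have hM : Function.IsPeriodicPt (fun w : ℂ => w ^ n) M w := by
    rw [Function.IsPeriodicPt, Function.IsFixedPt, pow_iterate]
    show w ^ n ^ M = w
    rw [← Nat.sub_add_cancel (Nat.one_le_pow M n (by omega)), pow_succ, hw, one_mul]
  refine ⟨hM, fun r hr hrM hrw => ?_⟩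
  have hw0 : w ≠ 0 := by
    rintro rfl
    rw [zero_pow (Nat.sub_ne_zero_of_lt (Nat.one_lt_pow (by omega : M ≠ 0) hn))] at hw
    exact zero_ne_one hw
  set d := r.gcd M
  have hd : w ^ n ^ d = w := by
    have hr' : Function.IsPeriodicPt (fun w : ℂ => w ^ n) r w := hrw
    simpa only [Function.IsPeriodicPt, Function.IsFixedPt, pow_iterate] using hr'.gcd hM
  refine hdiv d (Nat.gcd_pos_of_pos_left M hr) (Nat.gcd_dvd_right r M)
    ((Nat.gcd_le_left M hr).trans_lt hrM) (mul_left_cancel₀ hw0 ?_)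
  rw [← pow_succ', Nat.sub_add_cancel (Nat.one_le_pow d n (by omega)), hd, mul_one]

theorem exists_mem_perSet_eval_ne_zero {n M : ℕ} (hn : 2 ≤ n) (hM : 3 ≤ M) {Q : ℂ[X]}
    (hQ : Q ≠ 0) (hdeg : Q.natDegree ≤ (n - 1) * n ^ (M - 1)) :
    ∃ w, w ≠ 0 ∧ w ∈ perSet n M ∧ Q.eval w ≠ 0 := by
  set bad := (Ico 1 (M - 1)).biUnion fun d => nthRootsFinset (n ^ d - 1) (1 : ℂ)
  set good := nthRootsFinset (n ^ M - 1) (1 : ℂ) \ bad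
  have hnM : n * n ^ (M - 1) = n ^ M := by rw [← pow_succ', Nat.sub_add_cancel (by omega)]
  have hbad : #bad + 2 ≤ n ^ (M - 1) := by
    have hcard : #bad ≤ ∑ d ∈ Ico 1 (M - 1), n ^ d :=
      card_biUnion_le.trans (sum_le_sum fun d _ => by
        rw [Complex.card_nthRootsFinset_one]; exact Nat.sub_le _ _)
    have hgeom := Nat.geomSum_lt hn (s := range (M - 1)) (n := M - 1) (by simp)
    rw [sum_range_eq_add_Ico _ (by omega), pow_zero] at hgeom
    omega
  have hgood : (n - 1) * n ^ (M - 1) < #good := by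
    have hsdiff : n ^ M - 1 - #bad ≤ #good := by
      simpa only [Complex.card_nthRootsFinset_one] using le_card_sdiff bad (nthRootsFinset _ 1)
    have : (n - 1) * n ^ (M - 1) + n ^ (M - 1) = n ^ M := by
      rw [← hnM, ← Nat.succ_mul, Nat.succ_eq_add_one, Nat.sub_add_cancel (by omega)]
    omega
  obtain ⟨w, hw, hQw⟩ : ∃ w ∈ good, Q.eval w ≠ 0 := by
    by_contra! h
    exact hQ (eq_zero_of_natDegree_lt_card_of_eval_eq_zero' Q good h (hdeg.trans_lt hgood))
  obtain ⟨hwM, hwbad⟩ := mem_sdiff.mp hw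
  have hpos : ∀ d, 0 < d → 0 < n ^ d - 1 := fun d hd =>
    Nat.sub_pos_of_lt (Nat.one_lt_pow hd.ne' hn)
  rw [mem_nthRootsFinset (hpos M (by omega))] at hwM
  refine ⟨w, ?_, mem_perSet_of_pow_eq_one hn hwM fun d hd hdvd hlt hwd => hwbad ?_, hQw⟩
  · rintro rfl
    rw [zero_pow (hpos M (by omega)).ne'] at hwM
    exact zero_ne_one hwM
  · have := Nat.two_mul_le_of_dvd_of_lt hdvd hlt
    exact mem_biUnion.mpr
      ⟨d, mem_Ico.mpr ⟨hd, by omega⟩, (mem_nthRootsFinset (hpos d hd) 1).mpr hwd⟩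

theorem mem_Jset {n k : ℕ} : k ∈ Jset n ↔ k < 2 * n ∧ k ≠ n - 1 ∧ k ≠ n := by
  simp [Jset]

theorem mem_Jset_two_mul_sub_one {n : ℕ} (hn : 2 ≤ n) : 2 * n - 1 ∈ Jset n :=
  mem_Jset.mpr (by omega)

theorem Jset_filter_le_eq_erase (n : ℕ) :
    (Jset n).filter (· ≤ 2 * n - 2) = (Jset n).erase (2 * n - 1) := by
  ext k
  simp only [Finset.mem_filter, Finset.mem_erase, mem_Jset]
  omega

section multiplierPolynomial

variable {n M : ℕ}

theorem P_coeff_one_eq_zero {i : ℕ} (hn : 2 ≤ n) (hM : 3 ≤ M) (hi : i < 2 * n - 1) :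
    (P n i M).coeff 1 = 0 := by
  have hsq : n * n ≤ n ^ (M - 1) := by
    rw [← sq]; exact Nat.pow_le_pow_right (by omega) (by omega)
  have h4 : 4 ≤ n * n := by nlinarith
  rw [P, coeff_C_mul]
  split_ifs with hlow hmid
  · rw [coeff_add, coeff_X_pow, if_neg, coeff_sum_X_pow_of_forall_ne, add_zero, mul_zero]
    · intro j _ hj
      rcases Nat.eq_zero_or_pos j with rfl | hj0
      · have : n + 2 ≤ n * n := by nlinarith
        simp only [pow_zero, one_mul] at hj
        omega
      · have hdvd : n ∣ n ^ (M - 1) - n ^ j * (n - i) :=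
          Nat.dvd_sub (dvd_pow_self n (by omega))
            (dvd_mul_of_dvd_left (dvd_pow_self n (by omega)) _)
        rw [hj, Nat.dvd_one] at hdvd
        omega
    · have : n ^ (M - 1) ≤ (i + 1) * n ^ (M - 1) := Nat.le_mul_of_pos_left _ (by omega)
      omega
  · rw [coeff_sum_X_pow_of_forall_ne, mul_zero]
    intro j _
    omega
  · omega

theorem P_top_coeff_one_ne_zero (hn : 2 ≤ n) (hM : 1 ≤ M) : (P n (2 * n - 1) M).coeff 1 ≠ 0 := by
  obtain ⟨M, rfl⟩ := Nat.exists_eq_add_of_le' hM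
  have hexp : ∀ j, n ^ j * (n - 1) + n ^ M ≠ 1 := by
    intro j
    have : 1 * 1 ≤ n ^ j * (n - 1) := Nat.mul_le_mul (Nat.one_le_pow j n (by omega)) (by omega)
    have := Nat.one_le_pow M n (by omega)
    omega
  rw [P, if_neg (by omega), if_neg (by omega), Nat.add_sub_cancel, coeff_C_mul, coeff_add,
    coeff_X_one, coeff_sum_X_pow_of_forall_ne fun j _ => hexp j, add_zero, mul_one,
    Nat.cast_sub (by omega), pow_succ]
  have hn0 : (n : ℂ) ≠ 0 := by exact_mod_cast (by omega : n ≠ 0)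
  have hn1 : (n : ℂ) - 1 ≠ 0 := sub_ne_zero.mpr (by exact_mod_cast (by omega : n ≠ 1))
  convert mul_ne_zero (pow_ne_zero M hn0) hn1 using 1
  push_cast
  ring

theorem P_natDegree_le {i : ℕ} (hn : 3 ≤ n) : (P n i M).natDegree ≤ (n - 1) * n ^ (M - 1) := by
  have hpos : 0 < n ^ (M - 1) := Nat.pow_pos (by omega)
  refine (natDegree_C_mul_le _ _).trans ?_
  split_ifs with hlow hmid
  · refine (natDegree_add_le _ _).trans (max_le ?_ (natDegree_sum_X_pow_le fun j _ => ?_))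
    · rw [natDegree_X_pow]
      have : (i + 1) * n ^ (M - 1) ≤ (n - 1) * n ^ (M - 1) := Nat.mul_le_mul_right _ (by omega)
      omega
    · have : n ^ (M - 1) ≤ (n - 1) * n ^ (M - 1) := Nat.le_mul_of_pos_left _ (by omega)
      omega
  · refine natDegree_sum_X_pow_le fun j hj => ?_
    have : n ^ j ≤ n ^ (M - 1) := Nat.pow_le_pow_right (by omega) (by simp at hj; omega)
    have : n ^ j * (i - n) ≤ n ^ (M - 1) * (n - 2) := Nat.mul_le_mul this (by omega)
    have : (n - 1) * n ^ (M - 1) = n ^ (M - 1) * (n - 2) + n ^ (M - 1) := by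
      rw [show n - 1 = n - 2 + 1 by omega]; ring
    omega
  · refine (natDegree_add_le _ _).trans (max_le ?_ (natDegree_sum_X_pow_le fun j hj => ?_))
    · rw [natDegree_X]
      have : 1 * 1 ≤ (n - 1) * n ^ (M - 1) := Nat.mul_le_mul (by omega) hpos
      omega
    · have : n ^ j * n ≤ n ^ (M - 1) := by
        rw [← pow_succ]; exact Nat.pow_le_pow_right (by omega) (by simp at hj; omega)
      have : n ^ j * (n - 1) ≤ n ^ j * n := Nat.mul_le_mul_left _ (by omega)
      have : 2 * n ^ (M - 1) ≤ (n - 1) * n ^ (M - 1) := Nat.mul_le_mul_right _ (by omega)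
      omega

theorem sum_smul_P_ne_zero (hn : 2 ≤ n) (hM : 3 ≤ M) {c : Jset n → ℂ}
    (hc : c ⟨2 * n - 1, mem_Jset_two_mul_sub_one hn⟩ ≠ 0) : ∑ i, c i • P n i M ≠ 0 := by
  intro h0
  have hcoeff := congrArg (coeff · 1) h0
  simp only [finsetSum_coeff, coeff_smul, smul_eq_mul, coeff_zero] at hcoeff
  rw [sum_eq_single _ (fun i _ hi => ?_) (by simp)] at hcoeff
  · exact mul_ne_zero hc (P_top_coeff_one_ne_zero hn (by omega)) hcoeff
  · have : (i : ℕ) < 2 * n - 1 := by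
      have := (mem_Jset.mp i.2).1
      have : (i : ℕ) ≠ 2 * n - 1 := fun h => hi (Subtype.ext h)
      omega
    rw [P_coeff_one_eq_zero hn hM this, mul_zero]

theorem natDegree_sum_smul_P_le {ι : Type*} (hn : 3 ≤ n) (s : Finset ι) (c : ι → ℂ)
    (j : ι → ℕ) :
    (∑ i ∈ s, c i • P n (j i) M).natDegree ≤ (n - 1) * n ^ (M - 1) :=
  natDegree_sum_le_of_forall_le _ _ fun _ _ => (natDegree_smul_le _ _).trans (P_natDegree_le hn)

end multiplierPolynomial

theorem step_two_general (n : ℕ) (hn : 3 ≤ n) (m : ℕ → ℕ)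
    (hm2 : 3 ≤ m (2 * n - 1))
    (z : ℕ → ℂ)
    (hdet : (Matrix.of fun (k i : ((Jset n).filter (· ≤ 2 * n - 2) : Finset ℕ)) =>
        z (k : ℕ) ^ (-((n : ℤ) ^ (m (k : ℕ) - 1))) *
          (P n (i : ℕ) (m (k : ℕ))).eval (z (k : ℕ))).det ≠ 0) :
    ∃ w : ℂ, w ≠ 0 ∧ w ∈ perSet n (m (2 * n - 1)) ∧
      (Matrix.of fun (k i : (Jset n : Finset ℕ)) =>
        Function.update z (2 * n - 1) w (k : ℕ) ^ (-((n : ℤ) ^ (m (k : ℕ) - 1))) *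
          (P n (i : ℕ) (m (k : ℕ))).eval (Function.update z (2 * n - 1) w (k : ℕ))).det
        ≠ 0 := by
  set F : ℕ → ℂ → ℕ → ℂ := fun k v i => v ^ (-((n : ℤ) ^ (m k - 1))) * (P n i (m k)).eval v
  have htop := mem_Jset_two_mul_sub_one (by omega : 2 ≤ n)
  set C := Matrix.of fun k i : Jset n => F k (z k) i
  have hcof : C.adjugate ⟨_, htop⟩ ⟨_, htop⟩ ≠ 0 := by
    rw [Jset_filter_le_eq_erase] at hdet
    exact (Matrix.adjugate_apply_self_eq_det_erase (fun k i => F k (z k) i) htop).trans_ne hdet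
  obtain ⟨w, hw0, hwper, hQw⟩ := exists_mem_perSet_eval_ne_zero (by omega) hm2
    (sum_smul_P_ne_zero (c := fun i => C.adjugate i ⟨_, htop⟩) (by omega) hm2 hcof)
    (natDegree_sum_smul_P_le hn _ _ _)
  refine ⟨w, hw0, hwper, ?_⟩
  rw [Matrix.of_update_eq_updateRow F z htop w, Matrix.det_updateRow_mul_eval]
  exact mul_ne_zero (zpow_ne_zero _ hw0) hQw

/-- Lemma 6.5 (final inductive step, case `m_{2n-1} ≥ 3`): for `n ≥ 3`, if there are
nonzero periodic points `z_k` of minimal periods `m_k` (for `k ∈ J_n`, `k ≤ 2n-2`)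
making the matrix with `(k,i)`-entry `z_k^{-n^{m_k-1}} P_{n,i,m_k}(z_k)` invertible,
then there is a nonzero periodic point `z_{2n-1}` of minimal period `m_{2n-1}` such
that the full `(2n-2)×(2n-2)` matrix indexed by `J_n` is invertible. -/
theorem step_two (n : ℕ) (hn : 3 ≤ n) (m : ℕ → ℕ)
    (hm1 : ∀ k ∈ Jset n, 1 ≤ m k)
    (hm2 : 3 ≤ m (2 * n - 1))
    (z : ℕ → ℂ)
    (hz : ∀ k ∈ (Jset n).filter (· ≤ 2 * n - 2), z k ≠ 0 ∧ z k ∈ perSet n (m k))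
    (hdet : (Matrix.of fun (k i : ((Jset n).filter (· ≤ 2 * n - 2) : Finset ℕ)) =>
        z (k : ℕ) ^ (-((n : ℤ) ^ (m (k : ℕ) - 1))) *
          (P n (i : ℕ) (m (k : ℕ))).eval (z (k : ℕ))).det ≠ 0) :
    ∃ w : ℂ, w ≠ 0 ∧ w ∈ perSet n (m (2 * n - 1)) ∧
      (Matrix.of fun (k i : (Jset n : Finset ℕ)) =>
        Function.update z (2 * n - 1) w (k : ℕ) ^ (-((n : ℤ) ^ (m (k : ℕ) - 1))) *
          (P n (i : ℕ) (m (k : ℕ))).eval (Function.update z (2 * n - 1) w (k : ℕ))).det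
        ≠ 0 :=
  step_two_general n hn m hm2 z hdet
end
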